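/- arXiv:1512.08155 — 8 statements merged into one kernel-verified Lean document; each statement's English description precedes it below -/
import Mathlib

section
/- The total number of edges of the 132-core D_n equals binomial(n+1, 4). -/
/-- Vertices of the cores: pairs (i,j) with 1 ≤ i ≤ j ≤ n. -/
def DVert (n : ℕ) (p : ℕ × ℕ) : Prop := 1 ≤ p.1 ∧ p.1 ≤ p.2 ∧ p.2 ≤ n

/-- One-directional (southeast) adjacency of the 132-core. -/
def DOne (n : ℕ) (p q : ℕ × ℕ) : Prop :=
  p.1 < q.1 ∧ q.1 ≤ p.2 ∧ p.2 < q.2 ∧ q.2 ≤ n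

/-- Adjacency of the 132-core `D_n`. -/
def DAdj (n : ℕ) (p q : ℕ × ℕ) : Prop := DOne n p q ∨ DOne n q p

/-- One-directional adjacency of the 123-core. -/
def UOne (n : ℕ) (p q : ℕ × ℕ) : Prop :=
  p.1 < q.1 ∧ p.2 < q.2 ∧ q.1 ≤ n ∧ q.2 ≤ n

/-- Adjacency of the 123-core `U_n`. -/
def UAdj (n : ℕ) (p q : ℕ × ℕ) : Prop := UOne n p q ∨ UOne n q p

/-!
An edge `(i, j) → (k, l)` of `D_n` is exactly a chain `1 ≤ i < k ≤ j < l ≤ n`, that is,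
`i < k < j + 1 < l + 1` in `{1, …, n + 1}`. Reading off the four entries is therefore a bijection
between the edges and the `4`-element subsets of `{1, …, n + 1}`, which are enumerated by
increasing maps `Fin 4 ↪o ℕ`.
-/

open Finset

namespace Finset

variable {β : Type*} [LinearOrder β]

def powersetCardEquivOrderEmbedding (s : Finset β) (k : ℕ) :
    {t // t ∈ s.powersetCard k} ≃ {f : Fin k ↪o β // ∀ i, f i ∈ s} where
  toFun t := ⟨t.1.orderEmbOfFin (mem_powersetCard.1 t.2).2,
    fun _ => (mem_powersetCard.1 t.2).1 (orderEmbOfFin_mem ..)⟩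
  invFun f := ⟨univ.map f.1.toEmbedding, mem_powersetCard.2
    ⟨fun _ hx => by obtain ⟨i, -, rfl⟩ := mem_map.1 hx; exact f.2 i, by simp⟩⟩
  left_inv t := Subtype.ext (map_orderEmbOfFin_univ ..)
  right_inv f := Subtype.ext (orderEmbOfFin_unique' _ (by simp)).symm

theorem natCard_finOrderEmbedding_into (s : Finset β) (k : ℕ) :
    Nat.card {f : Fin k ↪o β // ∀ i, f i ∈ s} = s.card.choose k := by
  rw [← Nat.card_congr (s.powersetCardEquivOrderEmbedding k), Nat.card_eq_finsetCard,
    card_powersetCard]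

end Finset

theorem strictMono_vecCons_four {α : Type*} [Preorder α] {a b c d : α}
    (hab : a < b) (hbc : b < c) (hcd : c < d) : StrictMono ![a, b, c, d] :=
  Fin.strictMono_iff_lt_succ.2 (by simp [Fin.forall_fin_succ, hab, hbc, hcd])

theorem dVert_and_dVert_and_dOne_iff {n : ℕ} {p q : ℕ × ℕ} :
    DVert n p ∧ DVert n q ∧ DOne n p q ↔
      1 ≤ p.1 ∧ p.1 < q.1 ∧ q.1 ≤ p.2 ∧ p.2 < q.2 ∧ q.2 ≤ n := by
  simp only [DVert, DOne]
  omega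

def DEdge (n : ℕ) : Type :=
  {pq : (ℕ × ℕ) × (ℕ × ℕ) // DVert n pq.1 ∧ DVert n pq.2 ∧ DOne n pq.1 pq.2}

def dEdgeEquivOrderEmbedding (n : ℕ) :
    DEdge n ≃ {f : Fin 4 ↪o ℕ // ∀ i, f i ∈ Icc 1 (n + 1)} where
  toFun e :=
    have h := dVert_and_dVert_and_dOne_iff.1 e.2
    ⟨OrderEmbedding.ofStrictMono ![e.1.1.1, e.1.2.1, e.1.1.2 + 1, e.1.2.2 + 1]
      (strictMono_vecCons_four (by omega) (by omega) (by omega)),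
      fun i => by fin_cases i <;> simp <;> omega⟩
  invFun f :=
    have h01 := f.1.strictMono (show (0 : Fin 4) < 1 by decide)
    have h12 := f.1.strictMono (show (1 : Fin 4) < 2 by decide)
    have h23 := f.1.strictMono (show (2 : Fin 4) < 3 by decide)
    have h0 := mem_Icc.1 (f.2 0)
    have h3 := mem_Icc.1 (f.2 3)
    ⟨((f.1 0, f.1 2 - 1), (f.1 1, f.1 3 - 1)),
      dVert_and_dVert_and_dOne_iff.2 (by dsimp only; omega)⟩
  left_inv _ := rfl
  right_inv f := by
    have h12 := f.1.strictMono (show (1 : Fin 4) < 2 by decide)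
    have h23 := f.1.strictMono (show (2 : Fin 4) < 3 by decide)
    ext i
    fin_cases i <;> simp [Nat.sub_add_cancel (Nat.one_le_of_lt h12),
      Nat.sub_add_cancel (Nat.one_le_of_lt h23)]

/-- Each edge is counted once, oriented from northwest to southeast. -/
theorem dcore_edge_count (n : ℕ) :
    Nat.card {pq : (ℕ × ℕ) × (ℕ × ℕ) //
        DVert n pq.1 ∧ DVert n pq.2 ∧ DOne n pq.1 pq.2} =
      (n + 1).choose 4 := by
  calc Nat.card (DEdge n)
      = Nat.card {f : Fin 4 ↪o ℕ // ∀ i, f i ∈ Icc 1 (n + 1)} :=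
        Nat.card_congr (dEdgeEquivOrderEmbedding n)
    _ = (n + 1).choose 4 := by
      rw [natCard_finOrderEmbedding_into, Nat.card_Icc, Nat.add_sub_cancel]
end

section
/- For integers n ≥ 0 and k ≥ 1, the number of cliques of size k in the 132-core D_n equals binomial(n+1, 2k). -/
/-!
Listed by first coordinate, a `k`-clique of `D_n` reads `(i₁, j₁), …, (i_k, j_k)` with
`i₁ < ⋯ < i_k ≤ j₁ < ⋯ < j_k`, so `S ↦ {i₁, …, i_k, j₁ + 1, …, j_k + 1}` lands in the `2k`-subsets
of `{1, …, n + 1}`; conversely a `2k`-subset pairs its `t`-th smallest element `a` with its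
`(k + t)`-th smallest `b` to give the vertex `(a, b - 1)`. The map is injective because inside
`endpoints S` the rank of `j + 1` exceeds the rank of `i` by exactly `k` for every `(i, j) ∈ S`.
-/

open Finset

theorem Finset.strictMonoOn_card_filter_lt {α : Type*} [LinearOrder α] (A : Finset α) :
    StrictMonoOn (fun a => #{x ∈ A | x < a}) A := by
  intro a ha b _ hab
  refine card_lt_card (ssubset_iff_of_subset (monotone_filter_right A ?_) |>.2 ⟨a, ?_, ?_⟩)
  · exact fun x _ hx => hx.trans hab
  · exact mem_filter.2 ⟨ha, hab⟩
  · simp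

def IsDClique (n : ℕ) (S : Finset (ℕ × ℕ)) : Prop :=
  (∀ p ∈ S, DVert n p) ∧ ∀ p ∈ S, ∀ q ∈ S, p ≠ q → DAdj n p q

def endpoints (S : Finset (ℕ × ℕ)) : Finset ℕ :=
  S.image Prod.fst ∪ S.image (·.2 + 1)

namespace IsDClique

variable {n : ℕ} {S T : Finset (ℕ × ℕ)} {p q : ℕ × ℕ}

theorem fst_le_snd (hS : IsDClique n S) (hp : p ∈ S) (hq : q ∈ S) : p.1 ≤ q.2 := by
  by_cases hpq : p = q
  · exact hpq ▸ (hS.1 p hp).2.1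
  · rcases hS.2 p hp q hq hpq with ⟨h₁, h₂, h₃, -⟩ | ⟨-, h, -⟩
    · omega
    · exact h

theorem fst_lt_fst_iff (hS : IsDClique n S) (hp : p ∈ S) (hq : q ∈ S) :
    p.1 < q.1 ↔ p.2 < q.2 := by
  by_cases hpq : p = q
  · simp [hpq]
  · rcases hS.2 p hp q hq hpq with h | h
    · exact iff_of_true h.1 h.2.2.1
    · exact iff_of_false h.1.asymm h.2.2.1.asymm

theorem eq_of_fst_eq (hS : IsDClique n S) (hp : p ∈ S) (hq : q ∈ S) (h : p.1 = q.1) :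
    p = q := by
  have := hS.fst_lt_fst_iff hp hq
  have := hS.fst_lt_fst_iff hq hp
  exact Prod.ext h (by omega)

theorem eq_of_snd_eq (hS : IsDClique n S) (hp : p ∈ S) (hq : q ∈ S) (h : p.2 = q.2) :
    p = q := by
  have := hS.fst_lt_fst_iff hp hq
  have := hS.fst_lt_fst_iff hq hp
  exact Prod.ext (by omega) h

theorem disjoint_image_fst_image_snd_succ (hS : IsDClique n S) :
    Disjoint (S.image Prod.fst) (S.image (·.2 + 1)) := by
  simp only [disjoint_left, mem_image, not_exists, not_and]
  rintro _ ⟨p, hp, rfl⟩ q hq h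
  have := hS.fst_le_snd hp hq
  omega

theorem card_endpoints (hS : IsDClique n S) : #(endpoints S) = 2 * #S := by
  rw [endpoints, card_union_of_disjoint hS.disjoint_image_fst_image_snd_succ,
    card_image_of_injOn fun p hp q hq => hS.eq_of_fst_eq hp hq,
    card_image_of_injOn fun p hp q hq h => hS.eq_of_snd_eq hp hq (by simpa using h), two_mul]

theorem endpoints_subset (hS : IsDClique n S) : endpoints S ⊆ Icc 1 (n + 1) := by
  intro a ha
  simp only [endpoints, mem_union, mem_image] at ha
  rw [mem_Icc]
  rcases ha with ⟨p, hp, rfl⟩ | ⟨p, hp, rfl⟩ <;>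
  · have := hS.1 p hp
    simp only [DVert] at this
    omega

theorem card_endpoints_lt_fst (hS : IsDClique n S) (hp : p ∈ S) :
    #{a ∈ endpoints S | a < p.1} = #{q ∈ S | q.1 < p.1} := by
  have hsnd : {a ∈ S.image (·.2 + 1) | a < p.1} = ∅ := by
    simp only [filter_eq_empty_iff, mem_image]
    rintro _ ⟨q, hq, rfl⟩
    have := hS.fst_le_snd hp hq
    omega
  rw [endpoints, filter_union, hsnd, union_empty, filter_image,
    card_image_of_injOn fun q hq r hr => hS.eq_of_fst_eq (mem_filter.1 hq).1 (mem_filter.1 hr).1]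

theorem card_endpoints_lt_snd_succ (hS : IsDClique n S) (hp : p ∈ S) :
    #{a ∈ endpoints S | a < p.2 + 1} = #S + #{a ∈ endpoints S | a < p.1} := by
  have hfst : {q ∈ S | q.1 < p.2 + 1} = S :=
    filter_true_of_mem fun q hq => Nat.lt_succ_of_le (hS.fst_le_snd hq hp)
  have hsnd : {q ∈ S | q.2 + 1 < p.2 + 1} = {q ∈ S | q.1 < p.1} :=
    filter_congr fun q hq => by rw [Nat.add_lt_add_iff_right, hS.fst_lt_fst_iff hq hp]
  rw [hS.card_endpoints_lt_fst hp, endpoints, filter_union, filter_image, filter_image, hfst,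
    hsnd,
    card_union_of_disjoint (hS.disjoint_image_fst_image_snd_succ.mono_right
      (image_subset_image (filter_subset _ _))),
    card_image_of_injOn fun q hq r hr => hS.eq_of_fst_eq hq hr,
    card_image_of_injOn fun q hq r hr h =>
      hS.eq_of_snd_eq (mem_filter.1 hq).1 (mem_filter.1 hr).1 (by simpa using h)]

theorem card_endpoints_lt_fst_lt_card (hS : IsDClique n S) (hp : p ∈ S) :
    #{a ∈ endpoints S | a < p.1} < #S := by
  rw [hS.card_endpoints_lt_fst hp]
  exact card_lt_card (filter_ssubset.2 ⟨p, hp, lt_irrefl _⟩)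

theorem eq_of_endpoints_eq (hS : IsDClique n S) (hT : IsDClique n T) (hcard : #S = #T)
    (h : endpoints S = endpoints T) : S = T := by
  refine eq_of_subset_of_card_le (fun p hp => ?_) hcard.ge
  have hpS := hS.card_endpoints_lt_snd_succ hp
  have hp₁ : p.1 ∈ endpoints T := h ▸ mem_union_left _ (mem_image_of_mem _ hp)
  have hp₂ : p.2 + 1 ∈ endpoints T := h ▸ mem_union_right _ (mem_image_of_mem _ hp)
  rw [h] at hpS
  rcases mem_union.1 hp₁ with hq | hq <;> obtain ⟨q, hq, hqp⟩ := mem_image.1 hq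
  · have hqT := hT.card_endpoints_lt_snd_succ hq
    have hq₂ : q.2 + 1 ∈ endpoints T := mem_union_right _ (mem_image_of_mem _ hq)
    have hsnd : p.2 + 1 = q.2 + 1 :=
      (strictMonoOn_card_filter_lt _).injOn hp₂ hq₂ (by rw [hpS, hqT, hcard, hqp])
    rwa [Prod.ext hqp.symm (by omega)]
  · have hlt := hS.card_endpoints_lt_fst_lt_card hp
    have hqT := hT.card_endpoints_lt_snd_succ hq
    rw [h, ← hqp, hqT] at hlt
    omega

end IsDClique

theorem isDClique_image_castAdd_natAdd {n k : ℕ} {e : Fin (k + k) → ℕ} (he : StrictMono e)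
    (hbound : ∀ i, 1 ≤ e i ∧ e i ≤ n + 1) :
    IsDClique n (univ.image fun t => (e (Fin.castAdd k t), e (Fin.natAdd k t) - 1)) := by
  have hlt : ∀ t s : Fin k, t ≤ s → e (Fin.castAdd k s) < e (Fin.natAdd k t) := fun t s _ =>
    he (by simp only [Fin.lt_def, Fin.val_castAdd, Fin.val_natAdd]; omega)
  have hadj : ∀ t s : Fin k, t < s → DOne n (e (Fin.castAdd k t), e (Fin.natAdd k t) - 1)
      (e (Fin.castAdd k s), e (Fin.natAdd k s) - 1) := by
    intro t s hts
    have h₁ := he (Fin.strictMono_castAdd k hts)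
    have h₂ := hlt t s hts.le
    have h₃ := he (Fin.strictMono_natAdd k hts)
    have := hbound (Fin.natAdd k s)
    simp only [DOne]
    omega
  simp only [IsDClique, mem_image, mem_univ, true_and, forall_exists_index,
    forall_apply_eq_imp_iff]
  refine ⟨fun t => ?_, fun t s hts => ?_⟩
  · have := hbound (Fin.castAdd k t)
    have := hbound (Fin.natAdd k t)
    have := hlt t t le_rfl
    simp only [DVert]
    omega
  · rcases lt_or_gt_of_ne (fun h : t = s => hts (h ▸ rfl)) with h | h
    · exact Or.inl (hadj t s h)
    · exact Or.inr (hadj s t h)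

theorem exists_isDClique_endpoints_eq {n k : ℕ} {A : Finset ℕ} (hA : A ⊆ Icc 1 (n + 1))
    (hcard : #A = 2 * k) : ∃ S, IsDClique n S ∧ #S = k ∧ endpoints S = A := by
  have hcard' : #A = k + k := hcard.trans (two_mul k)
  set e := A.orderEmbOfFin hcard'
  have he : ∀ i, 1 ≤ e i ∧ e i ≤ n + 1 := fun i => mem_Icc.1 (hA (A.orderEmbOfFin_mem _ i))
  refine ⟨_, isDClique_image_castAdd_natAdd e.strictMono he, ?_, ?_⟩
  · rw [card_image_of_injective _ fun t s h =>
      Fin.castAdd_injective _ _ (e.injective (congrArg Prod.fst h)), card_univ, Fintype.card_fin]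
  · ext a
    simp only [endpoints, mem_union, mem_image, mem_univ, true_and, exists_exists_eq_and]
    constructor
    · rintro (⟨t, rfl⟩ | ⟨t, rfl⟩)
      · exact A.orderEmbOfFin_mem _ _
      · rw [Nat.sub_add_cancel (he _).1]
        exact A.orderEmbOfFin_mem _ _
    · intro ha
      obtain ⟨i, rfl⟩ : a ∈ Set.range e := by rwa [A.range_orderEmbOfFin]
      induction i using Fin.addCases with
      | left t => exact Or.inl ⟨t, rfl⟩
      | right t => exact Or.inr ⟨t, Nat.sub_add_cancel (he _).1⟩

theorem dcore_clique_count_general (n k : ℕ) :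
    Nat.card {S : Finset (ℕ × ℕ) // S.card = k ∧ (∀ p ∈ S, DVert n p) ∧
        ∀ p ∈ S, ∀ q ∈ S, p ≠ q → DAdj n p q} =
      (n + 1).choose (2 * k) := by
  let F := (Icc 1 (n + 1)).powersetCard (2 * k)
  let φ : {S : Finset (ℕ × ℕ) // #S = k ∧ IsDClique n S} → F := fun S =>
    ⟨endpoints S, mem_powersetCard.2
      ⟨S.2.2.endpoints_subset, by rw [S.2.2.card_endpoints, S.2.1]⟩⟩
  have hφ : Function.Bijective φ := by
    refine ⟨fun S T h => Subtype.ext (S.2.2.eq_of_endpoints_eq T.2.2 (S.2.1.trans T.2.1.symm)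
      (congrArg Subtype.val h)), fun A => ?_⟩
    obtain ⟨hsub, hcard⟩ := mem_powersetCard.1 A.2
    obtain ⟨S, hS, hSk, hSA⟩ := exists_isDClique_endpoints_eq hsub hcard
    exact ⟨⟨S, hSk, hS⟩, Subtype.ext hSA⟩
  calc _ = Nat.card F := Nat.card_eq_of_bijective φ hφ
    _ = _ := by rw [Nat.card_eq_finsetCard, card_powersetCard, Nat.card_Icc, Nat.add_sub_cancel]

/-- The number of cliques of size `k ≥ 1` in the 132-core `D_n` is
`binomial(n+1, 2k)`. -/
theorem dcore_clique_count (n k : ℕ) (hk : 1 ≤ k) :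
    Nat.card {S : Finset (ℕ × ℕ) // S.card = k ∧ (∀ p ∈ S, DVert n p) ∧
        ∀ p ∈ S, ∀ q ∈ S, p ≠ q → DAdj n p q} =
      (n + 1).choose (2 * k) :=
  dcore_clique_count_general n k
end

section
/- In the 132-core D_n, the degree of a vertex (i,j) equals (j - i)·(n - 1 - (j - i)). -/
/-!
The neighbours of `(i, j)` in `D_n` split into two boxes: the `(k, l)` with `DOne n (i, j) (k, l)`,
i.e. `i < k ≤ j < l ≤ n`, and the `(k, l)` with `DOne n (k, l) (i, j)` that are vertices,
i.e. `1 ≤ k < i ≤ l < j`. They are disjoint (`k > i` versus `k < i`), so the degree is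
`(j - i) (n - j) + (i - 1) (j - i) = (j - i) (n - 1 - (j - i))`.
-/

namespace DCore

open Finset

def neighborFinset (n i j : ℕ) : Finset (ℕ × ℕ) :=
  Ioc i j ×ˢ Ioc j n ∪ Ico 1 i ×ˢ Ico i j

variable {n i j : ℕ}

theorem mem_neighborFinset (hj : j ≤ n) (q : ℕ × ℕ) :
    q ∈ neighborFinset n i j ↔ DVert n q ∧ DAdj n (i, j) q := by
  obtain ⟨k, l⟩ := q
  simp only [neighborFinset, mem_union, mem_product, mem_Ioc, mem_Ico, DVert, DAdj, DOne]
  omega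

theorem card_neighborFinset :
    #(neighborFinset n i j) = (j - i) * (n - j) + (i - 1) * (j - i) := by
  have hdisj : Disjoint (Ioc i j ×ˢ Ioc j n) (Ico 1 i ×ˢ Ico i j) :=
    disjoint_product.mpr <| Or.inl <| disjoint_left.mpr fun k hk hk' => by
      simp only [mem_Ioc, mem_Ico] at hk hk'
      omega
  rw [neighborFinset, card_union_of_disjoint hdisj, card_product, card_product,
    Nat.card_Ioc, Nat.card_Ioc, Nat.card_Ico, Nat.card_Ico]

end DCore

/-- In the 132-core `D_n`, the degree of vertex `(i,j)` is
`(j-i)·(n-1-(j-i))`. -/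
theorem dcore_degree (n i j : ℕ) (hv : DVert n (i, j)) :
    Nat.card {q : ℕ × ℕ // DVert n q ∧ DAdj n (i, j) q} =
      (j - i) * (n - 1 - (j - i)) := by
  obtain ⟨hi, hij, hjn⟩ : 1 ≤ i ∧ i ≤ j ∧ j ≤ n := hv
  have hcard : Nat.card {q : ℕ × ℕ // DVert n q ∧ DAdj n (i, j) q} =
      (DCore.neighborFinset n i j).card := by
    rw [← Nat.card_eq_finsetCard]
    exact Nat.card_congr (Equiv.subtypeEquivRight fun q => (DCore.mem_neighborFinset hjn q).symm)
  rw [hcard, DCore.card_neighborFinset, Nat.mul_comm (i - 1), ← Nat.mul_add]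
  congr 1
  omega
end

section
/- The map φ_n sending the vertex (i,j) of the 132-core D_n to the chord e_{i,j+1} of the complete graph on n+1 polygon vertices is a bijection from the vertex set of D_n onto the set of chords {(a,b) : 1 ≤ a < b ≤ n+1} of the (n+1)-gon, and independent sets in D_n correspond exactly to non-crossing subsets of chords. -/
/-- Chords `e_{a₁,a₂}` and `e_{b₁,b₂}` (with `a₁ < b₁`) cross iff
`a₁ < b₁ < a₂ < b₂`. -/
def Crosses (a b : ℕ × ℕ) : Prop := a.1 < b.1 ∧ b.1 < a.2 ∧ a.2 < b.2

/-- Symmetrised crossing relation. -/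
def CrossSym (a b : ℕ × ℕ) : Prop := Crosses a b ∨ Crosses b a

/-- A chord of the polygon with `m` vertices labelled `1, …, m`. -/
def Chord (m : ℕ) (e : ℕ × ℕ) : Prop := 1 ≤ e.1 ∧ e.1 < e.2 ∧ e.2 ≤ m

/-- The map `φ_n : (i,j) ↦ e_{i,j+1}`. -/
def phi (p : ℕ × ℕ) : ℕ × ℕ := (p.1, p.2 + 1)

/-!
Shifting the second coordinate by one turns the adjacency condition `i < k ≤ j < ℓ` of `D_n`
into the crossing condition `i < k < j + 1 < ℓ + 1`; the extra bound `ℓ ≤ n` in `DOne` holds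
automatically for vertices of `D_n`.
-/

theorem phi_injective : Function.Injective phi := by
  rintro ⟨i, j⟩ ⟨k, l⟩ h
  simp only [phi, Prod.mk.injEq, Nat.add_right_cancel_iff] at h
  rw [h.1, h.2]

theorem phi_bijOn (n : ℕ) : Set.BijOn phi {p | DVert n p} {e | Chord (n + 1) e} := by
  refine ⟨fun p ⟨h₁, h₂, h₃⟩ => ⟨h₁, by dsimp [phi]; omega, by dsimp [phi]; omega⟩,
    phi_injective.injOn, fun e ⟨h₁, h₂, h₃⟩ => ⟨(e.1, e.2 - 1), ?_, ?_⟩⟩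
  · exact ⟨h₁, by dsimp; omega, by dsimp; omega⟩
  · exact Prod.ext rfl (by dsimp [phi]; omega)

theorem dOne_iff_crosses_phi {n : ℕ} {p q : ℕ × ℕ} (hq : q.2 ≤ n) :
    DOne n p q ↔ Crosses (phi p) (phi q) := by
  simp only [DOne, Crosses, phi]
  omega

theorem dAdj_iff_crossSym_phi {n : ℕ} {p q : ℕ × ℕ} (hp : p.2 ≤ n) (hq : q.2 ≤ n) :
    DAdj n p q ↔ CrossSym (phi p) (phi q) :=
  or_congr (dOne_iff_crosses_phi hq) (dOne_iff_crosses_phi hp)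

/-- `φ_n` is a bijection from the vertices of `D_n` onto the chords of the
`(n+1)`-gon, and independent sets of `D_n` correspond exactly to
non-crossing sets of chords. -/
theorem phi_bijection_noncrossing (n : ℕ) :
    Set.BijOn phi {p | DVert n p} {e | Chord (n + 1) e} ∧
    ∀ S : Set (ℕ × ℕ), (∀ p ∈ S, DVert n p) →
      ((∀ p ∈ S, ∀ q ∈ S, ¬ DAdj n p q) ↔
        (∀ p ∈ S, ∀ q ∈ S, ¬ CrossSym (phi p) (phi q))) :=
  ⟨phi_bijOn n, fun _ hS => forall₂_congr fun p hp => forall₂_congr fun q hq =>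
    not_congr (dAdj_iff_crossSym_phi (hS p hp).2.2 (hS q hq).2.2)⟩
end

section
/- The number of 132-avoiding permutations of length n with exactly k left-to-right minima equals the Narayana number (1/n)·binomial(n, k)·binomial(n, k-1), for 1 ≤ k ≤ n. -/
def IsLRMin {n : ℕ} (π : Equiv.Perm (Fin n)) (i : Fin n) : Prop :=
  ∀ j, j < i → π i < π j

def Avoids132 {n : ℕ} (π : Equiv.Perm (Fin n)) : Prop :=
  ¬ ∃ i j k : Fin n, i < j ∧ j < k ∧ π i < π k ∧ π k < π j

/-!
Record a permutation of `Fin n` by the positions `0 = s₀ < ⋯ < s_{k-1}` and the values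
`v₀ > ⋯ > v_{k-1} = 0` of its left-to-right minima; every entry left of `s_{i+1}` is at least
`v_i`, so `v_i + s_{i+1} ≤ n`. A 132-avoiding permutation is determined by this data, since
each of its other entries must be the least unused value above the current minimum; and this
greedy filling turns every such pair of sequences into a 132-avoiding permutation.

With `a_i = s_{i+1} - 1` and `c_i = n - 1 - v_i` the data becomes a pair of `(k-1)`-subsets
`A, C` of `Fin (n-1)` such that below every threshold `C` has at most as many elements as `A`.
Exchanging the tails of a pair violating this at the first threshold where `C` is ahead is a
bijection onto all pairs of sizes `(k-2, k)`. Hence `n` times the count is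
`n (C(n-1,k-1)² - C(n-1,k-2) C(n-1,k)) = C(n,k) C(n,k-1)`.
-/

open Finset

section LRMin

variable {n : ℕ}

lemma isLRMin_of_forall_le {π : Equiv.Perm (Fin n)} {p : Fin n} (h : ∀ j ≤ p, π p ≤ π j) :
    IsLRMin π p :=
  fun j hj => (h j hj.le).lt_of_ne (π.injective.ne hj.ne')

lemma exists_isLRMin_le (π : Equiv.Perm (Fin n)) (u : Fin n) :
    ∃ p ≤ u, IsLRMin π p ∧ π p ≤ π u := by
  obtain ⟨p, hp, hmin⟩ := (Iic u).exists_min_image π ⟨u, mem_Iic.2 le_rfl⟩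
  exact ⟨p, mem_Iic.1 hp, isLRMin_of_forall_le fun j hj =>
    hmin j (mem_Iic.2 (hj.trans (mem_Iic.1 hp))), hmin u (mem_Iic.2 le_rfl)⟩

lemma isLRMin_zero (π : Equiv.Perm (Fin (n + 1))) : IsLRMin π 0 :=
  fun j hj => absurd hj (Fin.not_lt_zero j)

lemma isLRMin_symm_zero (π : Equiv.Perm (Fin (n + 1))) : IsLRMin π (π.symm 0) :=
  isLRMin_of_forall_le fun j _ => by simp

end LRMin

/-- Positions `s` and values `v` of the left-to-right minima of a permutation of `Fin (m + 1)`,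
read from left to right. -/
structure IsLRMinProfile {m r : ℕ} (s v : Fin (r + 1) → Fin (m + 1)) : Prop where
  strictMono : StrictMono s
  strictAnti : StrictAnti v
  first_pos : s 0 = 0
  last_val : v (Fin.last r) = 0
  val_add_pos_le : ∀ i : Fin r, (v i.castSucc : ℕ) + s i.succ ≤ m + 1

lemma IsLRMinProfile.of_isLRMin_iff {m r : ℕ} {π : Equiv.Perm (Fin (m + 1))}
    {s : Fin (r + 1) → Fin (m + 1)} (hs : StrictMono s)
    (hmin : ∀ t, IsLRMin π t ↔ t ∈ Set.range s) : IsLRMinProfile s (π ∘ s) := by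
  have hanti : StrictAnti (π ∘ s) := fun i j hij => (hmin (s j)).2 ⟨j, rfl⟩ (s i) (hs hij)
  refine ⟨hs, hanti, ?_, ?_, fun i => ?_⟩
  · obtain ⟨i, hi⟩ := (hmin 0).1 (isLRMin_zero π)
    exact le_antisymm (hi ▸ hs.monotone (Fin.zero_le i)) (Fin.zero_le _)
  · obtain ⟨i, hi⟩ := (hmin _).1 (isLRMin_symm_zero π)
    exact le_antisymm ((hanti.antitone (Fin.le_last i)).trans (by simp [hi])) (Fin.zero_le _)
  · have hge : ∀ u < s i.succ, π (s i.castSucc) ≤ π u := by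
      intro u hu
      obtain ⟨p, hpu, hp, hle⟩ := exists_isLRMin_le π u
      obtain ⟨j, rfl⟩ := (hmin p).1 hp
      have hj : j ≤ i.castSucc := Fin.le_castSucc_iff.2 (hs.lt_iff_lt.1 (hpu.trans_lt hu))
      exact (hanti.antitone hj).trans hle
    have hcard := card_le_card_of_injOn π (s := Iio (s i.succ)) (t := Ici (π (s i.castSucc)))
      (fun u hu => mem_Ici.2 (hge u (mem_Iio.1 hu))) π.injective.injOn
    simp only [Fin.card_Iio, Fin.card_Ici, Function.comp_apply] at hcard ⊢
    omega

section Greedy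

variable {m r : ℕ} (s v : Fin (r + 1) → Fin (m + 1))

def runningMin (t : Fin (m + 1)) : Fin (m + 1) :=
  ({i | s i ≤ t} : Finset (Fin (r + 1))).inf v

-- At a position `s i` this is `v i` itself (`greedyValue_apply`), so no case split is needed.
noncomputable def greedyValue (t : Fin (m + 1)) : ℕ :=
  sInf {x | (runningMin s v t : ℕ) ≤ x ∧ ∀ u, ∀ _ : u < t, greedyValue u ≠ x}
termination_by t

variable {s v}

lemma runningMin_le {t : Fin (m + 1)} {i : Fin (r + 1)} (hi : s i ≤ t) :
    runningMin s v t ≤ v i :=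
  inf_le (by simpa using hi)

lemma runningMin_antitone : Antitone (runningMin s v) := fun _ _ hab =>
  Finset.inf_mono fun i hi => by
    simp only [mem_filter, mem_univ, true_and] at hi ⊢
    exact hi.trans hab

lemma greedyValue_le_of_forall_ne {t : Fin (m + 1)} {x : ℕ} (hx : (runningMin s v t : ℕ) ≤ x)
    (hxu : ∀ u < t, greedyValue s v u ≠ x) : greedyValue s v t ≤ x := by
  rw [greedyValue]
  exact Nat.sInf_le ⟨hx, hxu⟩

namespace IsLRMinProfile

variable (h : IsLRMinProfile s v)
include h

lemma exists_runningMin_eq (t : Fin (m + 1)) : ∃ i, s i ≤ t ∧ runningMin s v t = v i := by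
  obtain ⟨i, hi, he⟩ := exists_mem_eq_inf ({i | s i ≤ t} : Finset (Fin (r + 1)))
    ⟨0, by simp [h.first_pos]⟩ v
  exact ⟨i, by simpa using hi, he⟩

lemma runningMin_apply (i : Fin (r + 1)) : runningMin s v (s i) = v i :=
  le_antisymm (runningMin_le le_rfl) <| Finset.le_inf fun j hj =>
    h.strictAnti.antitone (h.strictMono.le_iff_le.1 (by simpa using hj))

lemma lt_runningMin {t : Fin (m + 1)} {i : Fin (r + 1)} (ht : t < s i) :
    v i < runningMin s v t := by
  obtain ⟨j, hj, hv⟩ := h.exists_runningMin_eq t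
  exact hv ▸ h.strictAnti (h.strictMono.lt_iff_lt.1 (hj.trans_lt ht))

lemma runningMin_add_le (t : Fin (m + 1)) : (runningMin s v t : ℕ) + t ≤ m := by
  obtain ⟨j, hj, hv⟩ := h.exists_runningMin_eq t
  rcases Fin.eq_castSucc_or_eq_last j with ⟨i, rfl⟩ | rfl
  · have ht : t < s i.succ := lt_of_not_ge fun hle =>
      (runningMin_le hle).not_gt (hv ▸ h.strictAnti (Fin.castSucc_lt_succ (i := i)))
    have := h.val_add_pos_le i
    rw [hv]
    omega
  · rw [hv, h.last_val]
    simpa using Fin.is_le t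

lemma exists_unused_value (t : Fin (m + 1)) :
    ∃ x ≤ m, (runningMin s v t : ℕ) ≤ x ∧ ∀ u < t, greedyValue s v u ≠ x := by
  -- `Icc (runningMin t) m` has more than `t` elements, and only `t` values are used before `t`
  have hcard : #((Iio t).image (greedyValue s v)) < #(Icc (runningMin s v t : ℕ) m) := by
    have := h.runningMin_add_le t
    calc _ ≤ #(Iio t) := card_image_le
      _ < _ := by simp; omega
  obtain ⟨x, hx, hxu⟩ := exists_mem_notMem_of_card_lt_card hcard
  simp only [mem_Icc, mem_image, mem_Iio, not_exists, not_and] at hx hxu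
  exact ⟨x, hx.2, hx.1, hxu⟩

lemma greedyValue_mem (t : Fin (m + 1)) :
    (runningMin s v t : ℕ) ≤ greedyValue s v t ∧
      ∀ u < t, greedyValue s v u ≠ greedyValue s v t := by
  obtain ⟨x, -, hx⟩ := h.exists_unused_value t
  have hne : {x | (runningMin s v t : ℕ) ≤ x ∧ ∀ u < t, greedyValue s v u ≠ x}.Nonempty := ⟨x, hx⟩
  rw [greedyValue]
  exact Nat.sInf_mem hne

lemma runningMin_le_greedyValue (t : Fin (m + 1)) : (runningMin s v t : ℕ) ≤ greedyValue s v t :=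
  (h.greedyValue_mem t).1

lemma greedyValue_ne_of_lt {u t : Fin (m + 1)} (hu : u < t) :
    greedyValue s v u ≠ greedyValue s v t :=
  (h.greedyValue_mem t).2 u hu

lemma greedyValue_le (t : Fin (m + 1)) : greedyValue s v t ≤ m := by
  obtain ⟨x, hxm, hx, hxu⟩ := h.exists_unused_value t
  exact (greedyValue_le_of_forall_ne hx hxu).trans hxm

lemma lt_greedyValue {u : Fin (m + 1)} {i : Fin (r + 1)} (hu : u < s i) :
    (v i : ℕ) < greedyValue s v u :=
  (Fin.lt_def.1 (h.lt_runningMin hu)).trans_le (h.runningMin_le_greedyValue u)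

lemma greedyValue_apply (i : Fin (r + 1)) : greedyValue s v (s i) = v i :=
  le_antisymm
    (greedyValue_le_of_forall_ne (by rw [h.runningMin_apply]) fun _ hu => (h.lt_greedyValue hu).ne')
    (h.runningMin_apply i ▸ h.runningMin_le_greedyValue (s i))

lemma runningMin_lt_greedyValue {t : Fin (m + 1)} (ht : t ∉ Set.range s) :
    (runningMin s v t : ℕ) < greedyValue s v t := by
  obtain ⟨j, hj, hv⟩ := h.exists_runningMin_eq t
  have hjt : s j < t := hj.lt_of_ne fun he => ht ⟨j, he⟩
  refine (h.runningMin_le_greedyValue t).lt_of_ne fun he => h.greedyValue_ne_of_lt hjt ?_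
  rw [h.greedyValue_apply, ← hv, he]

noncomputable def greedyPerm : Equiv.Perm (Fin (m + 1)) :=
  Equiv.ofBijective (fun t => ⟨greedyValue s v t, Nat.lt_succ_of_le (h.greedyValue_le t)⟩) <|
    Finite.injective_iff_bijective.1 <| Function.Injective.of_lt_imp_ne fun _ _ hab he =>
      h.greedyValue_ne_of_lt hab (congrArg Fin.val he)

lemma val_greedyPerm_apply (t : Fin (m + 1)) : (h.greedyPerm t : ℕ) = greedyValue s v t := rfl

lemma greedyPerm_apply (i : Fin (r + 1)) : h.greedyPerm (s i) = v i :=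
  Fin.ext (h.greedyValue_apply i)

lemma isLRMin_greedyPerm_iff (t : Fin (m + 1)) : IsLRMin h.greedyPerm t ↔ t ∈ Set.range s := by
  refine ⟨fun hmin => ?_, ?_⟩
  · by_contra ht
    obtain ⟨j, hj, hv⟩ := h.exists_runningMin_eq t
    have hjt : s j < t := hj.lt_of_ne fun he => ht ⟨j, he⟩
    have := Fin.lt_def.1 (hmin _ hjt)
    rw [val_greedyPerm_apply, val_greedyPerm_apply, h.greedyValue_apply, ← hv] at this
    exact (h.runningMin_lt_greedyValue ht).not_gt this
  · rintro ⟨i, rfl⟩ u hu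
    rw [Fin.lt_def, val_greedyPerm_apply, val_greedyPerm_apply, h.greedyValue_apply]
    exact h.lt_greedyValue hu

lemma card_isLRMin_greedyPerm : Nat.card {i // IsLRMin h.greedyPerm i} = r + 1 := by
  rw [Nat.card_congr (Equiv.subtypeEquivRight h.isLRMin_greedyPerm_iff)]
  exact (Nat.card_range_of_injective h.strictMono.injective).trans (Nat.card_fin _)

lemma avoids132_greedyPerm : Avoids132 h.greedyPerm := by
  rintro ⟨a, b, w, hab, hbw, hlow, hhigh⟩
  simp only [Fin.lt_def, val_greedyPerm_apply] at hlow hhigh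
  -- the value at `w` was still unused at `b`, and it exceeds the running minimum there
  have hrun : (runningMin s v b : ℕ) ≤ greedyValue s v w := by
    have := Fin.le_def.1 (runningMin_antitone (s := s) (v := v) hab.le)
    have := h.runningMin_le_greedyValue a
    omega
  have := greedyValue_le_of_forall_ne hrun fun u hu => h.greedyValue_ne_of_lt (hu.trans hbw)
  omega

end IsLRMinProfile

end Greedy

section Uniqueness

variable {m r : ℕ} {π : Equiv.Perm (Fin (m + 1))} {s : Fin (r + 1) → Fin (m + 1)}

lemma runningMin_le_apply (hmin : ∀ t, IsLRMin π t ↔ t ∈ Set.range s) (t : Fin (m + 1)) :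
    runningMin s (π ∘ s) t ≤ π t := by
  obtain ⟨p, hpt, hp, hle⟩ := exists_isLRMin_le π t
  obtain ⟨j, rfl⟩ := (hmin p).1 hp
  exact (runningMin_le hpt).trans hle

lemma Avoids132.eq_greedyPerm (hπ : Avoids132 π) (hmin : ∀ t, IsLRMin π t ↔ t ∈ Set.range s)
    (h : IsLRMinProfile s (π ∘ s)) : π = h.greedyPerm := by
  ext t
  rw [IsLRMinProfile.val_greedyPerm_apply]
  induction t using WellFoundedLT.induction with
  | _ t ih =>
  refine le_antisymm (not_lt.1 fun hlt => ?_) (greedyValue_le_of_forall_ne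
    (runningMin_le_apply hmin t) fun u hu he => hu.ne (π.injective (Fin.ext (by rw [ih u hu, he]))))
  -- otherwise the running minimum at `t`, the entry at `t` and the entry of value
  -- `greedyValue t` form a 132
  obtain ⟨w, hw⟩ := π.surjective ⟨greedyValue s (π ∘ s) t, by omega⟩
  replace hw : (π w : ℕ) = greedyValue s (π ∘ s) t := by rw [hw]
  have htw : t < w := by
    rcases lt_trichotomy w t with hwt | rfl | hwt
    · exact absurd (by rw [← ih w hwt, hw]) (h.greedyValue_ne_of_lt hwt)
    · omega
    · exact hwt
  obtain ⟨j, hjt, hj⟩ := h.exists_runningMin_eq t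
  have hrun := h.runningMin_le_greedyValue t
  rw [hj, Function.comp_apply] at hrun
  have hjt' : s j < t := hjt.lt_of_ne fun he => by rw [he] at hrun; omega
  have hjw : π (s j) < π w :=
    lt_of_le_of_ne (Fin.le_def.2 (hw ▸ hrun)) fun he => (hjt'.trans htw).ne (π.injective he)
  exact hπ ⟨s j, t, w, hjt', htw, hjw, Fin.lt_def.2 (hw ▸ hlt)⟩

end Uniqueness

theorem card_avoids132_eq_card_isLRMinProfile (m r : ℕ) :
    Nat.card {π : Equiv.Perm (Fin (m + 1)) // Avoids132 π ∧ Nat.card {i // IsLRMin π i} = r + 1} =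
      Nat.card {p : (Fin (r + 1) → Fin (m + 1)) × (Fin (r + 1) → Fin (m + 1)) //
        IsLRMinProfile p.1 p.2} := by
  refine (Nat.card_eq_of_bijective (fun p => ⟨p.2.greedyPerm, p.2.avoids132_greedyPerm,
    p.2.card_isLRMin_greedyPerm⟩) ⟨?_, ?_⟩).symm
  · rintro ⟨⟨s, v⟩, h⟩ ⟨⟨s', v'⟩, h'⟩ he
    have hπ : h.greedyPerm = h'.greedyPerm := congrArg Subtype.val he
    obtain rfl : s = s' := (h.strictMono.range_inj h'.strictMono).1 <| Set.ext fun t => by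
      rw [← h.isLRMin_greedyPerm_iff, ← h'.isLRMin_greedyPerm_iff, hπ]
    obtain rfl : v = v' :=
      funext fun i => (h.greedyPerm_apply i).symm.trans (hπ ▸ h'.greedyPerm_apply i)
    rfl
  · rintro ⟨π, hπ, hcard⟩
    classical
    have hS : #{t | IsLRMin π t} = r + 1 := by
      rw [← hcard, Nat.card_eq_fintype_card, Fintype.card_subtype]
    set s := ({t | IsLRMin π t} : Finset (Fin (m + 1))).orderEmbOfFin hS
    have hmin : ∀ t, IsLRMin π t ↔ t ∈ Set.range s := fun t => by simp [s]
    have h := IsLRMinProfile.of_isLRMin_iff s.strictMono hmin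
    exact ⟨⟨(s, π ∘ s), h⟩, Subtype.ext (hπ.eq_greedyPerm hmin h).symm⟩

lemma Fin.strictAnti_snoc {α : Type*} [Preorder α] {n : ℕ} {f : Fin n → α} {x : α} :
    StrictAnti (Fin.snoc f x : Fin (n + 1) → α) ↔ StrictAnti f ∧ ∀ i, x < f i := by
  refine ⟨fun h => ⟨fun i j hij => by simpa using h (Fin.castSucc_lt_castSucc_iff.2 hij),
    fun i => by simpa using h (Fin.castSucc_lt_last i)⟩, fun ⟨hf, hx⟩ i j hij => ?_⟩
  induction j using Fin.lastCases with
  | last =>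
    obtain ⟨i, rfl⟩ := Fin.exists_castSucc_eq.2 hij.ne
    simpa using hx i
  | cast j =>
    obtain ⟨i, rfl⟩ := Fin.exists_castSucc_eq.2 (hij.trans (Fin.castSucc_lt_last j)).ne
    simpa using hf (Fin.castSucc_lt_castSucc_iff.1 hij)

section Pairs

variable {m r : ℕ}

def profileOfPair (a c : Fin r → Fin m) :
    (Fin (r + 1) → Fin (m + 1)) × (Fin (r + 1) → Fin (m + 1)) :=
  (Fin.cons 0 fun i => (a i).succ, Fin.snoc (fun i => (c i).castSucc.rev) 0)

lemma isLRMinProfile_profileOfPair_iff {a c : Fin r → Fin m} :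
    IsLRMinProfile (profileOfPair a c).1 (profileOfPair a c).2 ↔
      StrictMono a ∧ StrictMono c ∧ ∀ i, a i ≤ c i := by
  have hdom : ∀ i, ((c i).castSucc.rev : ℕ) + (a i).succ ≤ m + 1 ↔ a i ≤ c i := fun i => by
    simp only [Fin.val_rev, Fin.val_castSucc, Fin.val_succ, Fin.le_def]
    omega
  constructor
  · rintro ⟨hs, hv, -, -, hsv⟩
    refine ⟨fun i j hij => ?_, fun i j hij => ?_,
      fun i => (hdom i).1 (by simpa [profileOfPair] using hsv i)⟩
    · simpa [profileOfPair] using hs (Fin.succ_lt_succ_iff.2 hij)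
    · simpa [profileOfPair] using hv (Fin.castSucc_lt_castSucc_iff.2 hij)
  · rintro ⟨ha, hc, hac⟩
    refine ⟨?_, ?_, rfl, by simp [profileOfPair],
      fun i => by simpa [profileOfPair] using (hdom i).2 (hac i)⟩
    · exact Fin.strictMono_cons.2 ⟨fun i => Fin.succ_pos _, fun i j hij => by simpa using ha hij⟩
    · refine (Fin.strictAnti_snoc (f := fun i => (c i).castSucc.rev) (x := 0)).2
        ⟨fun i j hij => ?_, fun i => by simp [Fin.lt_def]⟩
      have := Fin.lt_def.1 (hc hij)
      simp [Fin.lt_def]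
      omega

lemma profileOfPair_injective : Function.Injective2 (profileOfPair (m := m) (r := r)) := by
  intro a c a' c' h
  simp only [profileOfPair, Prod.mk.injEq] at h
  exact ⟨funext fun i => by simpa using congrFun h.1 i.succ,
    funext fun i => by simpa using congrFun h.2 i.castSucc⟩

lemma IsLRMinProfile.exists_profileOfPair {s v : Fin (r + 1) → Fin (m + 1)}
    (h : IsLRMinProfile s v) : ∃ a c, profileOfPair a c = (s, v) := by
  have hs : ∀ i : Fin r, s i.succ ≠ 0 := fun i =>
    h.first_pos ▸ (h.strictMono (Fin.succ_pos i)).ne'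
  have hv : ∀ i : Fin r, (v i.castSucc).rev ≠ Fin.last m := fun i => by
    rw [Ne, Fin.rev_eq_iff, Fin.rev_last]
    exact (h.last_val ▸ h.strictAnti (Fin.castSucc_lt_last i)).ne'
  refine ⟨fun i => (s i.succ).pred (hs i), fun i => (v i.castSucc).rev.castPred (hv i),
    Prod.ext (funext fun j => ?_) (funext fun j => ?_)⟩
  · cases j using Fin.cases <;> simp [profileOfPair, h.first_pos]
  · cases j using Fin.lastCases <;> simp [profileOfPair, h.last_val]

theorem card_isLRMinProfile_eq_card_orderEmbedding_le (m r : ℕ) :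
    Nat.card {p : (Fin (r + 1) → Fin (m + 1)) × (Fin (r + 1) → Fin (m + 1)) //
        IsLRMinProfile p.1 p.2} =
      Nat.card {q : (Fin r ↪o Fin m) × (Fin r ↪o Fin m) // ∀ i, q.1 i ≤ q.2 i} := by
  refine (Nat.card_eq_of_bijective (fun q => ⟨profileOfPair q.1.1 q.1.2,
    isLRMinProfile_profileOfPair_iff.2 ⟨q.1.1.strictMono, q.1.2.strictMono, q.2⟩⟩)
      ⟨?_, ?_⟩).symm
  · rintro ⟨⟨a, c⟩, _⟩ ⟨⟨a', c'⟩, _⟩ h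
    obtain ⟨ha, hc⟩ := profileOfPair_injective (congrArg Subtype.val h)
    dsimp only at ha hc
    simp [DFunLike.coe_injective ha, DFunLike.coe_injective hc]
  · rintro ⟨⟨s, v⟩, h⟩
    obtain ⟨a, c, he⟩ := h.exists_profileOfPair
    obtain ⟨ha, hc, hac⟩ := isLRMinProfile_profileOfPair_iff.1 (he ▸ h)
    exact ⟨⟨(OrderEmbedding.ofStrictMono a ha, OrderEmbedding.ofStrictMono c hc), hac⟩,
      Subtype.ext he⟩

end Pairs

section Reflection

variable {m : ℕ}

def countBelow (X : Finset (Fin m)) (x : ℕ) : ℕ := #{y ∈ X | y.val < x}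

def exchangeTails (X Y : Finset (Fin m)) (x : ℕ) : Finset (Fin m) × Finset (Fin m) :=
  ({y ∈ X | y.val < x} ∪ {y ∈ Y | x ≤ y.val}, {y ∈ Y | y.val < x} ∪ {y ∈ X | x ≤ y.val})

noncomputable def firstExcess (X Y : Finset (Fin m)) : ℕ :=
  sInf {x | countBelow X x < countBelow Y x}

noncomputable def reflectPair (P : Finset (Fin m) × Finset (Fin m)) :
    Finset (Fin m) × Finset (Fin m) :=
  exchangeTails P.1 P.2 (firstExcess P.1 P.2)

variable {X Y : Finset (Fin m)} {x x' : ℕ}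

lemma countBelow_mono (h : x ≤ x') : countBelow X x ≤ countBelow X x' :=
  card_le_card fun y hy => by
    simp only [mem_filter] at hy ⊢
    exact ⟨hy.1, hy.2.trans_le h⟩

lemma countBelow_succ_le (x : ℕ) : countBelow X (x + 1) ≤ countBelow X x + 1 := by
  have hsplit : {y ∈ X | y.val < x + 1} ⊆ {y ∈ X | y.val < x} ∪ {y ∈ X | y.val = x} :=
    fun y hy => by simp only [mem_filter, mem_union] at hy ⊢; grind
  have hone : #{y ∈ X | y.val = x} ≤ 1 :=
    card_le_one.2 fun a ha b hb => Fin.ext (by simp only [mem_filter] at ha hb; omega)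
  exact (card_le_card hsplit).trans ((card_union_le _ _).trans (by unfold countBelow; omega))

lemma countBelow_of_le (h : m ≤ x) : countBelow X x = #X :=
  congrArg card (filter_true_of_mem fun (y : Fin m) _ => y.isLt.trans_le h)

lemma countBelow_exchangeTails_fst (h : x' ≤ x) :
    countBelow (exchangeTails X Y x).1 x' = countBelow X x' := by
  unfold countBelow exchangeTails
  congr 1
  ext y
  simp only [mem_filter, mem_union]
  grind

lemma countBelow_exchangeTails_snd (h : x' ≤ x) :
    countBelow (exchangeTails X Y x).2 x' = countBelow Y x' :=
  countBelow_exchangeTails_fst (X := Y) (Y := X) h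

lemma card_exchangeTails_fst :
    #(exchangeTails X Y x).1 + countBelow Y x = countBelow X x + #Y := by
  have hdisj : Disjoint {y ∈ X | y.val < x} {y ∈ Y | x ≤ y.val} :=
    disjoint_left.2 fun y hX hY => by simp only [mem_filter] at hX hY; omega
  have hY : #{y ∈ Y | x ≤ y.val} + countBelow Y x = #Y := by
    rw [add_comm, countBelow, ← card_filter_add_card_filter_not (s := Y) (fun y => y.val < x)]
    simp only [not_lt]
  rw [exchangeTails, card_union_of_disjoint hdisj, ← hY]
  unfold countBelow
  ring

lemma card_exchangeTails_snd :
    #(exchangeTails X Y x).2 + countBelow X x = countBelow Y x + #X :=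
  card_exchangeTails_fst (X := Y) (Y := X)

lemma exchangeTails_exchangeTails :
    exchangeTails (exchangeTails X Y x).1 (exchangeTails X Y x).2 x = (X, Y) := by
  ext y <;> simp only [exchangeTails, mem_filter, mem_union] <;> grind

lemma countBelow_firstExcess (h : ∃ x, countBelow X x < countBelow Y x) :
    countBelow Y (firstExcess X Y) = countBelow X (firstExcess X Y) + 1 := by
  have hlt : countBelow X (firstExcess X Y) < countBelow Y (firstExcess X Y) := Nat.sInf_mem h
  obtain ⟨z, hz⟩ : ∃ z, firstExcess X Y = z + 1 :=
    Nat.exists_eq_add_one.2 (Nat.pos_of_ne_zero fun h0 => by simp [h0, countBelow] at hlt)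
  have hz' : ¬ countBelow X z < countBelow Y z :=
    Nat.notMem_of_lt_sInf (s := {x | countBelow X x < countBelow Y x})
      (by unfold firstExcess at hz; omega)
  rw [hz] at hlt ⊢
  have := countBelow_succ_le (X := Y) z
  have := countBelow_mono (X := X) (Nat.le_add_right z 1)
  omega

variable {P : Finset (Fin m) × Finset (Fin m)}

lemma countBelow_reflectPair (hx : x ≤ firstExcess P.1 P.2) :
    countBelow (reflectPair P).1 x = countBelow P.1 x ∧
      countBelow (reflectPair P).2 x = countBelow P.2 x :=
  ⟨countBelow_exchangeTails_fst hx, countBelow_exchangeTails_snd hx⟩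

lemma countBelow_reflectPair_lt (h : ∃ x, countBelow P.1 x < countBelow P.2 x) :
    countBelow (reflectPair P).1 (firstExcess P.1 P.2) <
      countBelow (reflectPair P).2 (firstExcess P.1 P.2) := by
  rw [(countBelow_reflectPair le_rfl).1, (countBelow_reflectPair le_rfl).2]
  exact Nat.sInf_mem h

lemma firstExcess_reflectPair (h : ∃ x, countBelow P.1 x < countBelow P.2 x) :
    firstExcess (reflectPair P).1 (reflectPair P).2 = firstExcess P.1 P.2 := by
  refine le_antisymm (Nat.sInf_le (countBelow_reflectPair_lt h))
    (le_csInf ⟨_, countBelow_reflectPair_lt h⟩ fun x (hx : countBelow _ _ < countBelow _ _) => ?_)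
  by_contra! hlt
  rw [(countBelow_reflectPair hlt.le).1, (countBelow_reflectPair hlt.le).2] at hx
  exact hlt.not_ge (Nat.sInf_le hx)

lemma reflectPair_reflectPair (h : ∃ x, countBelow P.1 x < countBelow P.2 x) :
    reflectPair (reflectPair P) = P := by
  rw [reflectPair, firstExcess_reflectPair h]
  exact exchangeTails_exchangeTails

lemma card_reflectPair (h : ∃ x, countBelow P.1 x < countBelow P.2 x) :
    #(reflectPair P).1 + 1 = #P.2 ∧ #(reflectPair P).2 = #P.1 + 1 := by
  have h₁ := card_exchangeTails_fst (X := P.1) (Y := P.2) (x := firstExcess P.1 P.2)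
  have h₂ := card_exchangeTails_snd (X := P.1) (Y := P.2) (x := firstExcess P.1 P.2)
  have := countBelow_firstExcess h
  unfold reflectPair
  constructor <;> omega

open scoped Classical in
theorem card_filter_exists_countBelow_lt (m q : ℕ) :
    #{P ∈ powersetCard (q + 1) (univ : Finset (Fin m)) ×ˢ
        powersetCard (q + 1) (univ : Finset (Fin m)) |
        ∃ x, countBelow P.1 x < countBelow P.2 x} = m.choose q * m.choose (q + 2) := by
  have hexcess : ∀ P ∈ powersetCard q (univ : Finset (Fin m)) ×ˢ powersetCard (q + 2) univ,
      ∃ x, countBelow P.1 x < countBelow P.2 x := fun P hP => by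
    simp only [mem_product, mem_powersetCard_univ] at hP
    exact ⟨m, by rw [countBelow_of_le le_rfl, countBelow_of_le le_rfl]; omega⟩
  calc _ = #(powersetCard q (univ : Finset (Fin m)) ×ˢ powersetCard (q + 2) univ) := by
        refine card_nbij' reflectPair reflectPair (fun P hP => ?_) (fun P hP => ?_)
          (fun P hP => reflectPair_reflectPair (mem_filter.1 hP).2)
          (fun P hP => reflectPair_reflectPair (hexcess P hP))
        · simp only [coe_filter, mem_product, mem_powersetCard_univ, Set.mem_ofPred_eq] at hP
          have := card_reflectPair hP.2
          simp only [coe_product, Set.mem_prod, mem_coe, mem_powersetCard_univ]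
          omega
        · have hP' := hexcess P (by simpa using hP)
          have := card_reflectPair hP'
          simp only [coe_product, Set.mem_prod, mem_coe, mem_powersetCard_univ] at hP
          simp only [coe_filter, mem_product, mem_powersetCard_univ, Set.mem_ofPred_eq]
          exact ⟨by omega, _, countBelow_reflectPair_lt hP'⟩
    _ = _ := by simp

open scoped Classical in
noncomputable def dominatedPairs (m r : ℕ) : Finset (Finset (Fin m) × Finset (Fin m)) :=
  {P ∈ powersetCard r (univ : Finset (Fin m)) ×ˢ powersetCard r (univ : Finset (Fin m)) |
    ∀ x, countBelow P.2 x ≤ countBelow P.1 x}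

open scoped Classical in
lemma card_dominatedPairs_add (m r : ℕ) :
    #(dominatedPairs m r) + #{P ∈ powersetCard r (univ : Finset (Fin m)) ×ˢ
        powersetCard r (univ : Finset (Fin m)) | ∃ x, countBelow P.1 x < countBelow P.2 x} =
      m.choose r ^ 2 := by
  simp_rw [dominatedPairs, ← not_lt, ← not_exists]
  rw [add_comm, card_filter_add_card_filter_not]
  simp [sq]

end Reflection

section OrderEmbeddings

variable {m r : ℕ}

lemma countBelow_map_univ (f : Fin r ↪o Fin m) (x : ℕ) :
    countBelow (univ.map f.toEmbedding) x = #{i | (f i).val < x} := by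
  simp [countBelow, filter_map, card_map]

lemma forall_le_iff_forall_countBelow_le (a c : Fin r ↪o Fin m) :
    (∀ i, a i ≤ c i) ↔
      ∀ x, countBelow (univ.map c.toEmbedding) x ≤ countBelow (univ.map a.toEmbedding) x := by
  simp only [countBelow_map_univ]
  refine ⟨fun h x => card_le_card fun i hi => ?_, fun h i => ?_⟩
  · simp only [mem_filter, mem_univ, true_and] at hi ⊢
    exact (Fin.le_def.1 (h i)).trans_lt hi
  · -- if `c i < a i`, then below `c i + 1` there are `i + 1` entries of `c` but at most `i` of `a`
    by_contra! hlt
    have h₁ : Iic i ⊆ ({j | (c j).val < c i + 1} : Finset (Fin r)) := fun j hj => by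
      simpa [Nat.lt_succ_iff, ← Fin.le_def] using c.monotone (mem_Iic.1 hj)
    have h₂ : ({j | (a j).val < c i + 1} : Finset (Fin r)) ⊆ Iio i := fun j hj => by
      simp only [mem_filter, mem_univ, true_and, Nat.lt_succ_iff, ← Fin.le_def] at hj
      exact mem_Iio.2 (a.lt_iff_lt.1 (hj.trans_lt hlt))
    have := (card_le_card h₁).trans ((h (c i + 1)).trans (card_le_card h₂))
    simp at this

theorem card_orderEmbedding_le_eq_card_dominatedPairs (m r : ℕ) :
    Nat.card {q : (Fin r ↪o Fin m) × (Fin r ↪o Fin m) // ∀ i, q.1 i ≤ q.2 i} =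
      #(dominatedPairs m r) := by
  classical
  rw [← Nat.card_eq_finsetCard]
  refine Nat.card_eq_of_bijective
    (fun q => ⟨(univ.map q.1.1.toEmbedding, univ.map q.1.2.toEmbedding), by
      simpa [dominatedPairs] using (forall_le_iff_forall_countBelow_le _ _).1 q.2⟩) ⟨?_, ?_⟩
  · rintro ⟨⟨a, c⟩, _⟩ ⟨⟨a', c'⟩, _⟩ h
    simp only [Subtype.mk.injEq, Prod.mk.injEq] at h
    simp [Set.powersetCard.ofFinEmbEquiv.injective (Subtype.ext h.1),
      Set.powersetCard.ofFinEmbEquiv.injective (Subtype.ext h.2)]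
  · rintro ⟨⟨A, C⟩, hP⟩
    simp only [dominatedPairs, mem_filter, mem_product, mem_powersetCard_univ] at hP
    refine ⟨⟨(A.orderEmbOfFin hP.1.1, C.orderEmbOfFin hP.1.2), ?_⟩, by simp⟩
    exact (forall_le_iff_forall_countBelow_le _ _).2 (by simpa using hP.2)

end OrderEmbeddings

lemma succ_mul_choose_sq (m q : ℕ) :
    (m + 1) * m.choose (q + 1) ^ 2 =
      (m + 1).choose (q + 2) * (m + 1).choose (q + 1) +
        (m + 1) * (m.choose q * m.choose (q + 2)) := by
  rw [Nat.choose_succ_succ m (q + 1), Nat.choose_succ_succ m q]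
  rcases le_or_gt m q with hmq | hmq
  · simp [Nat.choose_eq_zero_of_lt (show m < q + 1 by omega),
      Nat.choose_eq_zero_of_lt (show m < q + 2 by omega)]
  obtain ⟨d, rfl⟩ : ∃ d, m = q + 1 + d := ⟨m - (q + 1), by omega⟩
  have h₁ := Nat.choose_succ_right_eq (q + 1 + d) q
  have h₂ := Nat.choose_succ_right_eq (q + 1 + d) (q + 1)
  rw [show q + 1 + d - q = d + 1 by omega] at h₁
  rw [show q + 1 + d - (q + 1) = d by omega] at h₂
  refine Nat.eq_of_mul_eq_mul_left (show 0 < (d + 1) * (q + 2) by positivity) ?_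
  zify at h₁ h₂ ⊢
  linear_combination
    (((q : ℤ) + 2) * (q + 1 + d).choose (q + 1) +
        ((q : ℤ) + d + 3) * (q + 1 + d).choose (q + 1) * d) * h₁ -
      (((d : ℤ) + 1) * (q + 1 + d).choose (q + 1) +
        ((q : ℤ) + d + 3) * (q + 1 + d).choose q * (d + 1)) * h₂

theorem succ_mul_card_dominatedPairs (m r : ℕ) :
    (m + 1) * #(dominatedPairs m r) = (m + 1).choose (r + 1) * (m + 1).choose r := by
  classical
  have hsum := card_dominatedPairs_add m r
  rcases r with _ | q
  · have hbad : ∀ P ∈ powersetCard 0 (univ : Finset (Fin m)) ×ˢ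
        powersetCard 0 (univ : Finset (Fin m)), ¬ ∃ x, countBelow P.1 x < countBelow P.2 x :=
      fun P hP => by
        simp only [mem_product, mem_powersetCard_univ, card_eq_zero] at hP
        simp [hP.1, hP.2]
    rw [filter_false_of_mem hbad] at hsum
    simp_all
  · rw [card_filter_exists_countBelow_lt] at hsum
    have := succ_mul_choose_sq m q
    have := congrArg ((m + 1) * ·) hsum
    linarith

theorem narayana_count_132_general (n k : ℕ) (hk : 1 ≤ k) :
    n * Nat.card {π : Equiv.Perm (Fin n) //
        Avoids132 π ∧ Nat.card {i : Fin n // IsLRMin π i} = k} =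
      n.choose k * n.choose (k - 1) := by
  obtain ⟨r, rfl⟩ : ∃ r, k = r + 1 := ⟨k - 1, by omega⟩
  rcases n with _ | m
  · simp
  rw [card_avoids132_eq_card_isLRMinProfile, card_isLRMinProfile_eq_card_orderEmbedding_le,
    card_orderEmbedding_le_eq_card_dominatedPairs, Nat.add_sub_cancel]
  exact succ_mul_card_dominatedPairs m r

/-- The number of 132-avoiding permutations of length `n` with exactly `k`
left-to-right minima is the Narayana number `(1/n)·C(n,k)·C(n,k-1)`. -/
theorem narayana_count_132 (n k : ℕ) (hk : 1 ≤ k) (hkn : k ≤ n) :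
    n * Nat.card {π : Equiv.Perm (Fin n) //
        Avoids132 π ∧ Nat.card {i : Fin n // IsLRMin π i} = k} =
      n.choose k * n.choose (k - 1) :=
  narayana_count_132_general n k hk
end

section
/- The number of 123-avoiding permutations of length n with exactly k left-to-right minima equals the number of 132-avoiding permutations of length n with exactly k left-to-right minima. -/
/-- `π` avoids the pattern 123. -/
def Avoids123 {n : ℕ} (π : Equiv.Perm (Fin n)) : Prop :=
  ¬ ∃ i j k : Fin n, i < j ∧ j < k ∧ π i < π j ∧ π j < π k

/-!
Call the positions and values of the left-to-right minima of a permutation its minima data.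
Each class, 123-avoiding and 132-avoiding, contains exactly one permutation with any given
minima data that occurs at all, so both are counted by the possible minima data with `k`
minima.

Uniqueness: let `σ` and `π` have the same minima data and first differ at `i`, with
`σ i < π i`. Then `i` is not a minimum, so some `p < i` has `σ p = π p < σ i`. The value `π i`
occurs in `σ` after `i`, and `σ i` occurs in `π` after `i`: this is a 123 in `σ` and a 132 in `π`.

Existence: if `i < j < k` and `σ i` is below `σ j` and `σ k`, swapping the entries at `j` and `k`
keeps the minima data and changes `∑ m, m * σ m` by `(k - j) * (σ j - σ k)`. Hence a maximiser of
this weight within a fibre avoids 132 and a minimiser avoids 123.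
-/

theorem Nat.card_subtype_and_eq_ncard_image_of_injOn {α β : Type*} {f : α → β}
    {P R : α → Prop} (hinj : Set.InjOn f {a | P a}) (hrep : ∀ a, ∃ b, P b ∧ f b = f a)
    (hR : ∀ a b, f a = f b → R a → R b) :
    Nat.card {a // P a ∧ R a} = (f '' {a | R a}).ncard := by
  have himage : f '' {a | P a ∧ R a} = f '' {a | R a} := by
    refine (Set.image_mono fun a ha => ha.2).antisymm ?_
    rintro _ ⟨a, ha, rfl⟩
    obtain ⟨b, hb, hfb⟩ := hrep a
    exact ⟨b, ⟨hb, hR a b hfb.symm ha⟩, hfb⟩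
  rw [← himage, (hinj.mono fun a ha => ha.1).ncard_image]
  rfl

open Equiv

variable {n : ℕ}

theorem exists_lt_apply_of_not_isLRMin {σ : Perm (Fin n)} {i : Fin n} (h : ¬IsLRMin σ i) :
    ∃ p < i, σ p < σ i := by
  simp only [IsLRMin, not_forall, not_lt] at h
  obtain ⟨p, hp, hle⟩ := h
  exact ⟨p, hp, hle.lt_of_ne (σ.injective.ne hp.ne)⟩

open Classical in
noncomputable def lrMinData (σ : Perm (Fin n)) (i : Fin n) : Option (Fin n) :=
  if IsLRMin σ i then some (σ i) else none

theorem lrMinData_eq_iff {σ π : Perm (Fin n)} :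
    lrMinData σ = lrMinData π ↔
      (∀ i, IsLRMin σ i ↔ IsLRMin π i) ∧ ∀ i, IsLRMin σ i → σ i = π i := by
  constructor
  · intro h
    have hiff : ∀ i, IsLRMin σ i ↔ IsLRMin π i := fun i => by
      have := congrFun h i
      unfold lrMinData at this
      split_ifs at this <;> simp_all
    refine ⟨hiff, fun i hσ => ?_⟩
    simpa [lrMinData, hσ, (hiff i).1 hσ] using congrFun h i
  · rintro ⟨hiff, hval⟩
    funext i
    by_cases hσ : IsLRMin σ i
    · simp [lrMinData, hσ, (hiff i).1 hσ, hval i hσ]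
    · simp [lrMinData, hσ, mt (hiff i).2 hσ]

theorem nat_card_isLRMin_eq_of_lrMinData_eq {σ π : Perm (Fin n)}
    (h : lrMinData σ = lrMinData π) :
    Nat.card {i // IsLRMin σ i} = Nat.card {i // IsLRMin π i} :=
  Nat.card_congr (subtypeEquivRight (lrMinData_eq_iff.1 h).1)

section Uniqueness

variable {σ π : Perm (Fin n)} {i : Fin n}

theorem lt_symm_apply_of_eqOn_lt (hagree : ∀ j < i, σ j = π j) (hne : σ i ≠ π i) :
    i < σ.symm (π i) := by
  have hσm : σ (σ.symm (π i)) = π i := σ.apply_symm_apply _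
  rcases lt_trichotomy (σ.symm (π i)) i with hlt | heq | hgt
  · exact absurd (π.injective ((hagree _ hlt).symm.trans hσm)) hlt.ne
  · rw [heq] at hσm
    exact absurd hσm hne
  · exact hgt

theorem exists_lt_apply_of_lrMinData_eq_of_ne (hdata : lrMinData σ = lrMinData π)
    (hne : σ i ≠ π i) : ∃ p < i, σ p < σ i :=
  exists_lt_apply_of_not_isLRMin fun h => hne ((lrMinData_eq_iff.1 hdata).2 i h)

theorem not_avoids123_of_lrMinData_eq (hdata : lrMinData σ = lrMinData π)
    (hagree : ∀ j < i, σ j = π j) (hlt : σ i < π i) : ¬Avoids123 σ := by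
  obtain ⟨p, hp, hσp⟩ := exists_lt_apply_of_lrMinData_eq_of_ne hdata hlt.ne
  exact fun h => h ⟨p, i, σ.symm (π i), hp, lt_symm_apply_of_eqOn_lt hagree hlt.ne, hσp,
    by simpa using hlt⟩

theorem not_avoids132_of_lrMinData_eq (hdata : lrMinData σ = lrMinData π)
    (hagree : ∀ j < i, σ j = π j) (hlt : σ i < π i) : ¬Avoids132 π := by
  obtain ⟨p, hp, hσp⟩ := exists_lt_apply_of_lrMinData_eq_of_ne hdata hlt.ne
  have hm := lt_symm_apply_of_eqOn_lt (fun j hj => (hagree j hj).symm) hlt.ne'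
  exact fun h => h ⟨p, i, π.symm (σ i), hp, hm, by simpa [← hagree p hp] using hσp,
    by simpa using hlt⟩

theorem injOn_lrMinData {P : Perm (Fin n) → Prop}
    (hP : ∀ σ π i, lrMinData σ = lrMinData π → (∀ j < i, σ j = π j) → σ i < π i →
      P σ → P π → False) :
    Set.InjOn lrMinData {σ | P σ} := by
  intro σ hσ π hπ hdata
  by_contra hne
  obtain ⟨i₀, hi₀⟩ : ∃ i, σ i ≠ π i := by
    by_contra! h
    exact hne (Equiv.ext h)
  obtain ⟨i, hi, hmin⟩ := wellFounded_lt.has_min {i | σ i ≠ π i} ⟨i₀, hi₀⟩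
  have hagree : ∀ j < i, σ j = π j := fun j hj => not_not.1 fun h => hmin j h hj
  rcases lt_or_gt_of_ne hi with hlt | hgt
  · exact hP σ π i hdata hagree hlt hσ hπ
  · exact hP π σ i hdata.symm (fun j hj => (hagree j hj).symm) hgt hπ hσ

theorem injOn_lrMinData_avoids123 : Set.InjOn lrMinData {σ : Perm (Fin n) | Avoids123 σ} :=
  injOn_lrMinData fun _ _ _ hdata hagree hlt hσ _ =>
    not_avoids123_of_lrMinData_eq hdata hagree hlt hσ

theorem injOn_lrMinData_avoids132 : Set.InjOn lrMinData {σ : Perm (Fin n) | Avoids132 σ} :=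
  injOn_lrMinData fun _ _ _ hdata hagree hlt _ hπ =>
    not_avoids132_of_lrMinData_eq hdata hagree hlt hπ

end Uniqueness

section Existence

variable {σ : Perm (Fin n)} {i j k : Fin n}

theorem IsLRMin.mul_swap {m : Fin n} (hij : i < j) (hjk : j < k) (hj : σ i < σ j)
    (hk : σ i < σ k) (hm : IsLRMin σ m) :
    IsLRMin (σ * swap j k) m ∧ (σ * swap j k) m = σ m := by
  have hmj : m ≠ j := by rintro rfl; exact (hm i hij).asymm hj
  have hmk : m ≠ k := by rintro rfl; exact (hm i (hij.trans hjk)).asymm hk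
  have hτm : (σ * swap j k) m = σ m := by
    rw [Perm.mul_apply, swap_apply_of_ne_of_ne hmj hmk]
  refine ⟨fun l hl => ?_, hτm⟩
  rw [hτm, Perm.mul_apply]
  rcases eq_or_ne l j with rfl | hlj
  · rw [swap_apply_left]
    rcases lt_or_gt_of_ne hmk with hmk' | hkm
    · exact (hm i (hij.trans hl)).trans hk
    · exact hm k hkm
  rcases eq_or_ne l k with rfl | hlk
  · rw [swap_apply_right]
    exact hm j (hjk.trans hl)
  · rw [swap_apply_of_ne_of_ne hlj hlk]
    exact hm l hl

theorem lrMinData_mul_swap (hij : i < j) (hjk : j < k) (hj : σ i < σ j) (hk : σ i < σ k) :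
    lrMinData (σ * swap j k) = lrMinData σ := by
  have hback : σ * swap j k * swap j k = σ := by simp [mul_assoc]
  have hi : (σ * swap j k) i = σ i := by
    rw [Perm.mul_apply, swap_apply_of_ne_of_ne hij.ne (hij.trans hjk).ne]
  have hj' : (σ * swap j k) i < (σ * swap j k) j := by simpa [hi] using hk
  have hk' : (σ * swap j k) i < (σ * swap j k) k := by simpa [hi] using hj
  refine lrMinData_eq_iff.2 ⟨fun m => ⟨fun h => ?_, fun h => (h.mul_swap hij hjk hj hk).1⟩,
    fun m h => ?_⟩
  · simpa [hback] using (h.mul_swap hij hjk hj' hk').1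
  · simpa [hback] using ((h.mul_swap hij hjk hj' hk').2).symm

def weight (σ : Perm (Fin n)) : ℤ := ∑ m : Fin n, ((m : ℕ) : ℤ) * ((σ m : ℕ) : ℤ)

theorem weight_mul_swap (σ : Perm (Fin n)) (hjk : j ≠ k) :
    weight (σ * swap j k) =
      weight σ + (((k : ℕ) : ℤ) - (j : ℕ)) * (((σ j : ℕ) : ℤ) - (σ k : ℕ)) := by
  have hdiff : weight (σ * swap j k) - weight σ =
      (((k : ℕ) : ℤ) - (j : ℕ)) * (((σ j : ℕ) : ℤ) - (σ k : ℕ)) := by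
    rw [weight, weight, ← Finset.sum_sub_distrib, Fintype.sum_eq_add j k hjk]
    · simp only [Perm.mul_apply, swap_apply_left, swap_apply_right]
      ring
    · rintro m ⟨hmj, hmk⟩
      rw [Perm.mul_apply, swap_apply_of_ne_of_ne hmj hmk, sub_self]
  linarith

theorem exists_avoids132_lrMinData_eq (π : Perm (Fin n)) :
    ∃ σ, Avoids132 σ ∧ lrMinData σ = lrMinData π := by
  classical
  obtain ⟨σ, hσ, hmax⟩ := Finset.exists_max_image
    (Finset.univ.filter fun σ => lrMinData σ = lrMinData π) weight ⟨π, by simp⟩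
  rw [Finset.mem_filter] at hσ
  refine ⟨σ, fun ⟨i, j, k, hij, hjk, hik, hkj⟩ => ?_, hσ.2⟩
  have hτ := hmax (σ * swap j k)
    (by simp [lrMinData_mul_swap hij hjk (hik.trans hkj) hik, hσ.2])
  rw [weight_mul_swap σ hjk.ne] at hτ
  have hpos : 0 < (((k : ℕ) : ℤ) - (j : ℕ)) * (((σ j : ℕ) : ℤ) - (σ k : ℕ)) :=
    mul_pos (sub_pos.2 (by exact_mod_cast hjk)) (sub_pos.2 (by exact_mod_cast hkj))
  linarith

theorem exists_avoids123_lrMinData_eq (π : Perm (Fin n)) :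
    ∃ σ, Avoids123 σ ∧ lrMinData σ = lrMinData π := by
  classical
  obtain ⟨σ, hσ, hmin⟩ := Finset.exists_min_image
    (Finset.univ.filter fun σ => lrMinData σ = lrMinData π) weight ⟨π, by simp⟩
  rw [Finset.mem_filter] at hσ
  refine ⟨σ, fun ⟨i, j, k, hij, hjk, hij', hjk'⟩ => ?_, hσ.2⟩
  have hτ := hmin (σ * swap j k)
    (by simp [lrMinData_mul_swap hij hjk hij' (hij'.trans hjk'), hσ.2])
  rw [weight_mul_swap σ hjk.ne] at hτ
  have hneg : (((k : ℕ) : ℤ) - (j : ℕ)) * (((σ j : ℕ) : ℤ) - (σ k : ℕ)) < 0 :=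
    mul_neg_of_pos_of_neg (sub_pos.2 (by exact_mod_cast hjk))
      (sub_neg.2 (by exact_mod_cast hjk'))
  linarith

end Existence

/-- The number of 123-avoiding permutations of length `n` with exactly `k`
left-to-right minima equals the number of 132-avoiding permutations of
length `n` with exactly `k` left-to-right minima. -/
theorem count_123_eq_count_132 (n k : ℕ) :
    Nat.card {π : Equiv.Perm (Fin n) //
        Avoids123 π ∧ Nat.card {i : Fin n // IsLRMin π i} = k} =
    Nat.card {π : Equiv.Perm (Fin n) //
        Avoids132 π ∧ Nat.card {i : Fin n // IsLRMin π i} = k} := by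
  have hcard : ∀ σ π : Perm (Fin n), lrMinData σ = lrMinData π →
      Nat.card {i // IsLRMin σ i} = k → Nat.card {i // IsLRMin π i} = k :=
    fun _ _ h hσ => (nat_card_isLRMin_eq_of_lrMinData_eq h).symm.trans hσ
  rw [Nat.card_subtype_and_eq_ncard_image_of_injOn injOn_lrMinData_avoids123
      exists_avoids123_lrMinData_eq hcard,
    Nat.card_subtype_and_eq_ncard_image_of_injOn injOn_lrMinData_avoids132
      exists_avoids132_lrMinData_eq hcard]
end

section
/- The generating function F(x,y) satisfying F = 1 + x·F + x·y·F²/(1 − y·(F − 1)) has coefficient of x^n y^k equal to (1/n)·Σ_{j=0}^{n-1} binomial(n, k-j)·binomial(n, j+1)·binomial(n-1+j, n-1), for n ≥ 1. -/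
/-!
Write `F = 1 + G` and regard `F` as a power series in `x` over `ℚ⟦y⟧`. The functional equation
becomes `G (1 - y G) = x (1 + y)(1 + G)`, i.e. `G = x φ(G)` with
`φ(t) = (1 + y)(1 + t)/(1 - y t)`. Lagrange inversion gives
`n [xⁿ] G = [tⁿ⁻¹] φ(t)ⁿ = (1 + y)ⁿ ∑ⱼ C(n, j + 1) C(n - 1 + j, n - 1) yʲ`, and the coefficient
of `yᵏ` is the stated sum.

Lagrange inversion is proved by the residue argument: with `G = x U` and `V = U⁻¹`,
`G' = φ(G)ⁿ Vⁿ G'`, and `[xⁿ⁻¹] Gᵐ Vⁿ G'` is the residue of a derivative unless `m = n - 1`.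
-/

open MvPowerSeries

/-- The series `x` in two variables. -/
noncomputable def Xv : MvPowerSeries (Fin 2) ℚ := MvPowerSeries.X 0

/-- The series `y` in two variables. -/
noncomputable def Yv : MvPowerSeries (Fin 2) ℚ := MvPowerSeries.X 1

open Finset

namespace PowerSeries

variable {R : Type*} [CommRing R]

theorem coeff_pow_eq_zero_of_lt {G : R⟦X⟧} (hG : constantCoeff G = 0) {i m : ℕ} (h : i < m) :
    coeff i (G ^ m) = 0 :=
  X_pow_dvd_iff.mp (pow_dvd_pow_of_dvd (X_dvd_iff.mpr hG) m) i h

theorem coeff_subst_eq_sum_range {G : R⟦X⟧} (hG : constantCoeff G = 0) (f : R⟦X⟧) {i n : ℕ}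
    (hi : i ≤ n) :
    coeff i (f.subst G) = ∑ m ∈ range (n + 1), coeff m f * coeff i (G ^ m) := by
  rw [coeff_subst' (HasSubst.of_constantCoeff_zero' hG)]
  refine finsum_eq_sum_of_support_subset _ fun m hm => ?_
  by_contra hmn
  rw [coe_range, Set.mem_Iio, not_lt] at hmn
  exact hm (by simp only [coeff_pow_eq_zero_of_lt hG (by omega : i < m), smul_zero])

theorem coeff_subst_mul {G : R⟦X⟧} (hG : constantCoeff G = 0) (f T : R⟦X⟧) (n : ℕ) :
    coeff n (f.subst G * T) =
      ∑ m ∈ range (n + 1), coeff m f * coeff n (G ^ m * T) := by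
  calc coeff n (f.subst G * T)
      = ∑ p ∈ antidiagonal n, ∑ m ∈ range (n + 1),
          coeff m f * (coeff p.1 (G ^ m) * coeff p.2 T) := by
        rw [coeff_mul]
        refine sum_congr rfl fun p hp => ?_
        have hpn : p.1 ≤ n := by rw [HasAntidiagonal.mem_antidiagonal] at hp; omega
        rw [coeff_subst_eq_sum_range hG f hpn, sum_mul]
        simp_rw [mul_assoc]
    _ = _ := by
        rw [sum_comm]
        simp_rw [coeff_mul, mul_sum]

theorem constantCoeff_subst_of_constantCoeff_eq_zero {G : R⟦X⟧} (hG : constantCoeff G = 0)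
    (f : R⟦X⟧) : constantCoeff (f.subst G) = constantCoeff f := by
  rw [← coeff_zero_eq_constantCoeff_apply, coeff_subst_eq_sum_range hG f le_rfl]
  simp

/-- For `k ≥ 1`, `u⁻¹ ^ (k + 1) * d⁄dX (X * u) = u⁻¹ ^ k - X * d⁄dX (u⁻¹ ^ k) / k`, whose `k`-th
coefficient vanishes: the formal residue of a derivative is zero. -/
theorem coeff_inv_pow_mul_derivative_X_mul [IsAddTorsionFree R] (u : R⟦X⟧ˣ) (k : ℕ) :
    coeff k ((↑u⁻¹ : R⟦X⟧) ^ (k + 1) * d⁄dX R (X * (u : R⟦X⟧))) = if k = 0 then 1 else 0 := by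
  set v : R⟦X⟧ := ↑u⁻¹ with hv
  have hvu : v * u = 1 := u.inv_mul
  have hsplit : v ^ (k + 1) * d⁄dX R (X * (u : R⟦X⟧)) =
      v ^ k + X * (v ^ (k + 1) * d⁄dX R (u : R⟦X⟧)) := by
    rw [Derivation.leibniz, derivative_X, smul_eq_mul, smul_eq_mul, pow_succ]
    linear_combination v ^ k * hvu
  rw [hsplit, map_add]
  cases k with
  | zero => simp
  | succ k =>
    have hderiv : d⁄dX R (v ^ (k + 1)) =
        -(C ((k + 1 : ℕ) : R) * (v ^ (k + 2) * d⁄dX R (u : R⟦X⟧))) := by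
      rw [derivative_pow, add_tsub_cancel_right, derivative_inv, ← hv, map_natCast]
      ring
    have hcoeff := congrArg (coeff k) hderiv
    rw [coeff_derivative, map_neg, coeff_C_mul] at hcoeff
    rw [coeff_succ_X_mul, if_neg k.succ_ne_zero]
    apply nsmul_right_injective k.succ_ne_zero
    simp only [nsmul_eq_mul, mul_zero, mul_add]
    push_cast at hcoeff ⊢
    linear_combination hcoeff

theorem coeff_X_mul_pow_mul_inv_pow_mul_derivative [IsAddTorsionFree R] (u : R⟦X⟧ˣ) {m n : ℕ}
    (hmn : m ≤ n) :
    coeff n ((X * (u : R⟦X⟧)) ^ m * ((↑u⁻¹ : R⟦X⟧) ^ (n + 1) * d⁄dX R (X * (u : R⟦X⟧)))) =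
      if m = n then 1 else 0 := by
  obtain ⟨k, rfl⟩ := Nat.exists_eq_add_of_le hmn
  have hcancel :
      (X * (u : R⟦X⟧)) ^ m * ((↑u⁻¹ : R⟦X⟧) ^ (m + k + 1) * d⁄dX R (X * (u : R⟦X⟧))) =
        X ^ m * ((u : R⟦X⟧) * (↑u⁻¹ : R⟦X⟧)) ^ m *
          ((↑u⁻¹ : R⟦X⟧) ^ (k + 1) * d⁄dX R (X * (u : R⟦X⟧))) := by
    ring
  rw [hcancel, u.mul_inv, one_pow, mul_one, coeff_X_pow_mul', if_pos (by omega),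
    add_tsub_cancel_left, coeff_inv_pow_mul_derivative_X_mul]
  simp

theorem lagrange_inversion [IsAddTorsionFree R] {φ G : R⟦X⟧} (hφ : IsUnit (constantCoeff φ))
    (hG : G = X * φ.subst G) (n : ℕ) :
    (n + 1) • coeff (n + 1) G = coeff n (φ ^ (n + 1)) := by
  have hG0 : constantCoeff G = 0 := by rw [hG, map_mul, constantCoeff_X, zero_mul]
  obtain ⟨u, hu⟩ : IsUnit (φ.subst G) := by
    rwa [isUnit_iff_constantCoeff, constantCoeff_subst_of_constantCoeff_eq_zero hG0]
  have hDG : d⁄dX R G =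
      (φ ^ (n + 1)).subst G * ((↑u⁻¹ : R⟦X⟧) ^ (n + 1) * d⁄dX R G) := by
    rw [subst_pow (HasSubst.of_constantCoeff_zero' hG0), ← hu, ← mul_assoc, ← mul_pow,
      u.mul_inv, one_pow, one_mul]
  rw [← hu] at hG
  calc (n + 1) • coeff (n + 1) G = coeff n (d⁄dX R G) := by
        rw [coeff_derivative, nsmul_eq_mul, mul_comm, Nat.cast_succ]
    _ = ∑ m ∈ range (n + 1), coeff m (φ ^ (n + 1)) *
          coeff n (G ^ m * ((↑u⁻¹ : R⟦X⟧) ^ (n + 1) * d⁄dX R G)) := by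
      rw [← coeff_subst_mul hG0, ← hDG]
    _ = coeff n (φ ^ (n + 1)) := by
      rw [hG, sum_eq_single_of_mem n (self_mem_range_succ n)]
      · rw [coeff_X_mul_pow_mul_inv_pow_mul_derivative u le_rfl, if_pos rfl, mul_one]
      · intro m hm hmn
        rw [coeff_X_mul_pow_mul_inv_pow_mul_derivative u (mem_range_succ_iff.mp hm), if_neg hmn,
          mul_zero]

theorem coeff_one_add_X_pow (M k : ℕ) : coeff k ((1 + X : R⟦X⟧) ^ M) = M.choose k := by
  rw [← Polynomial.coeff_one_add_X_pow R M k, ← Polynomial.coeff_coe]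
  push_cast
  rfl

theorem rescale_mk_one_mul_one_sub (y : R) : rescale y (mk 1) * (1 - C y * X) = 1 := by
  rw [← rescale_X, ← map_one (rescale y), ← map_sub, ← map_mul, mk_one_mul_one_sub_eq_one,
    map_one]

/-- `φ(t) = (1 + y)(1 + t)/(1 - y t)`. -/
noncomputable def noncrossingKernel (y : R) : R⟦X⟧ := C (1 + y) * (1 + X) * rescale y (mk 1)

theorem constantCoeff_noncrossingKernel (y : R) : constantCoeff (noncrossingKernel y) = 1 + y := by
  have h : constantCoeff (rescale y (mk 1)) = 1 := by
    rw [← coeff_zero_eq_constantCoeff_apply, coeff_rescale]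
    simp
  simp [noncrossingKernel, h]

theorem subst_noncrossingKernel_mul {G : R⟦X⟧} (hG : constantCoeff G = 0) (y : R) :
    (noncrossingKernel y).subst G * (1 - C y * G) = C (1 + y) * (1 + G) := by
  have hσ := HasSubst.of_constantCoeff_zero' hG
  have hK : noncrossingKernel y * (1 - C y * X) = C (1 + y) * (1 + X) := by
    rw [noncrossingKernel, mul_assoc, rescale_mk_one_mul_one_sub, mul_one]
  have := congrArg (substAlgHom hσ) hK
  simp only [map_mul, map_sub, map_add, map_one, substAlgHom_X, C_eq_algebraMap,
    AlgHom.commutes, coe_substAlgHom] at this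
  simpa only [← C_eq_algebraMap, map_add, map_one] using this

theorem coeff_noncrossingKernel_pow (y : R) (n : ℕ) :
    coeff n (noncrossingKernel y ^ (n + 1)) =
      ∑ j ∈ range (n + 1),
        ((n + 1).choose (j + 1) * (n + j).choose n) • ((1 + y) ^ (n + 1) * y ^ j) := by
  have hpow : noncrossingKernel y ^ (n + 1) =
      C ((1 + y) ^ (n + 1)) *
        ((1 + X) ^ (n + 1) * rescale y (mk fun j => ((n + j).choose n : R))) := by
    rw [noncrossingKernel, mul_pow, mul_pow, ← map_pow, ← map_pow, mk_one_pow_eq_mk_choose_add,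
      mul_assoc]
  rw [hpow, coeff_C_mul, coeff_mul, ← Nat.sum_antidiagonal_swap,
    Nat.sum_antidiagonal_eq_sum_range_succ_mk, mul_sum]
  refine sum_congr rfl fun j hj => ?_
  rw [Prod.fst_swap, Prod.snd_swap, coeff_one_add_X_pow, coeff_rescale, coeff_mk,
    Nat.choose_symm_of_eq_add (by rw [mem_range] at hj; omega : n + 1 = n - j + (j + 1)),
    nsmul_eq_mul]
  push_cast
  ring

theorem coeff_succ_of_noncrossing_eq [IsAddTorsionFree R] {y : R}
    (hy : y ∈ (⊥ : Ideal R).jacobson) {G : R⟦X⟧}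
    (hG : G * (1 - C y * G) = X * (C (1 + y) * (1 + G))) (n : ℕ) :
    (n + 1) • coeff (n + 1) G =
      ∑ j ∈ range (n + 1),
        ((n + 1).choose (j + 1) * (n + j).choose n) • ((1 + y) ^ (n + 1) * y ^ j) := by
  have hunit (c : R) : IsUnit (1 - y * c) := by
    simpa [sub_eq_add_neg, add_comm] using Ideal.mem_jacobson_bot.mp hy (-c)
  have hG0 : constantCoeff G = 0 := by
    have h := congrArg constantCoeff hG
    simp only [map_mul, map_sub, map_one, constantCoeff_X, zero_mul, constantCoeff_C] at h
    exact (hunit _).mul_left_eq_zero.mp h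
  rw [← coeff_noncrossingKernel_pow]
  refine lagrange_inversion ?_ ?_ n
  · simpa [constantCoeff_noncrossingKernel] using hunit (-1)
  · have hunitG : IsUnit (1 - C y * G) := by
      rw [isUnit_iff_constantCoeff]
      simp [hG0]
    rw [← hunitG.mul_left_inj, hG, mul_assoc, subst_noncrossingKernel_mul hG0]

end PowerSeries

namespace MvPowerSeries

variable {σ R : Type*}

theorem X_mem_jacobson_bot [CommRing R] (i : σ) :
    X i ∈ (⊥ : Ideal (MvPowerSeries σ R)).jacobson :=
  Ideal.mem_jacobson_bot.mpr fun c => by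
    rw [isUnit_iff_constantCoeff]
    simp

theorem coeff_single_coeff_finSuccEquiv_one [CommRing R] (F : MvPowerSeries (Fin 2) R) (n k : ℕ) :
    coeff (Finsupp.single 0 k) (PowerSeries.coeff n (finSuccEquiv R 1 F)) =
      coeff (Finsupp.single 0 n + Finsupp.single 1 k) F := by
  have hcons : Finsupp.cons n (Finsupp.single (0 : Fin 1) k) =
      Finsupp.single 0 n + Finsupp.single 1 k := by
    ext i
    refine Fin.cases ?_ (fun j => ?_) i
    · simp
    · rw [Finsupp.cons_succ, Subsingleton.elim j 0]
      simp
  rw [coeff_coeff_finSuccEquiv, hcons]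

theorem coeff_single_one_add_X_pow_mul_X_pow [CommSemiring R] [DecidableEq σ]
    (i : σ) (M j k : ℕ) :
    coeff (Finsupp.single i k) ((1 + X i : MvPowerSeries σ R) ^ M * X i ^ j) =
      if j ≤ k then (M.choose (k - j) : R) else 0 := by
  have hterm : ∀ m ∈ range (M + 1),
      coeff (Finsupp.single i k)
        (X i ^ m * 1 ^ (M - m) * (M.choose m : MvPowerSeries σ R) * X i ^ j) =
      if m = k - j ∧ j ≤ k then (M.choose m : R) else 0 := by
    intro m _
    rw [one_pow, mul_one, mul_right_comm, ← pow_add, ← map_natCast (C (σ := σ)), mul_comm,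
      coeff_C_mul, coeff_X_pow]
    simp only [(Finsupp.single_injective i).eq_iff, mul_ite, mul_one, mul_zero]
    exact if_congr (by omega) rfl rfl
  rw [add_comm, add_pow, sum_mul, map_sum, sum_congr rfl hterm]
  split_ifs with hjk
  · simp only [hjk, and_true, sum_ite_eq', mem_range]
    split_ifs with hM
    · rfl
    · rw [Nat.choose_eq_zero_of_lt (by omega), Nat.cast_zero]
  · simp [hjk]

end MvPowerSeries

theorem noncrossing_eq_of_finSuccEquiv_eq {F : MvPowerSeries (Fin 2) ℚ}
    (heq : F * (1 - Yv * (F - 1)) = (1 + Xv * F) * (1 - Yv * (F - 1)) + Xv * Yv * F ^ 2)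
    {G : PowerSeries (MvPowerSeries (Fin 1) ℚ)} (hG : finSuccEquiv ℚ 1 F = 1 + G) :
    G * (1 - PowerSeries.C (X 0) * G) = PowerSeries.X * (PowerSeries.C (1 + X 0) * (1 + G)) := by
  have hX : finSuccEquiv ℚ 1 Xv = PowerSeries.X := finSuccEquiv_X_zero
  have hY : finSuccEquiv ℚ 1 Yv = PowerSeries.C (X 0) := finSuccEquiv_X_succ 0
  have h := congrArg (finSuccEquiv ℚ 1) heq
  simp only [map_mul, map_add, map_sub, map_one, map_pow, hX, hY, hG] at h
  rw [map_add, map_one]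
  linear_combination h

theorem noncrossing_gf_coeff_general (F : MvPowerSeries (Fin 2) ℚ)
    (heq : F * (1 - Yv * (F - 1)) =
      (1 + Xv * F) * (1 - Yv * (F - 1)) + Xv * Yv * F ^ 2) :
    ∀ n k : ℕ, 1 ≤ n →
      (n : ℚ) * MvPowerSeries.coeff (Finsupp.single 0 n + Finsupp.single 1 k) F =
        ∑ j ∈ Finset.range n,
          (if j ≤ k then
            (n.choose (k - j) * n.choose (j + 1) * (n - 1 + j).choose (n - 1) : ℚ)
           else 0) := by
  intro n k hn
  obtain ⟨N, rfl⟩ : ∃ N, n = N + 1 := ⟨n - 1, by omega⟩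
  have : IsAddTorsionFree (MvPowerSeries (Fin 1) ℚ) := .of_module_rat _
  obtain ⟨G, hG⟩ : ∃ G, finSuccEquiv ℚ 1 F = 1 + G := ⟨_, (add_sub_cancel 1 _).symm⟩
  have hlag := PowerSeries.coeff_succ_of_noncrossing_eq (X_mem_jacobson_bot (R := ℚ) (0 : Fin 1))
    (noncrossing_eq_of_finSuccEquiv_eq heq hG) N
  have hcoeff : PowerSeries.coeff (N + 1) G = PowerSeries.coeff (N + 1) (finSuccEquiv ℚ 1 F) := by
    rw [hG, map_add, PowerSeries.coeff_one, if_neg N.succ_ne_zero, zero_add]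
  have key := congrArg (coeff (Finsupp.single (0 : Fin 1) k)) hlag
  rw [map_nsmul, hcoeff, coeff_single_coeff_finSuccEquiv_one, map_sum] at key
  rw [← nsmul_eq_mul, key]
  refine sum_congr rfl fun j _ => ?_
  rw [map_nsmul, coeff_single_one_add_X_pow_mul_X_pow, add_tsub_cancel_right]
  split_ifs
  · ring
  · simp

/-- Any formal power series `F(x,y)` with `F(0,0) = 1` satisfying the
functional equation `F = 1 + xF + xyF²/(1 - y(F-1))` (cleared of
denominators) has coefficient of `x^n y^k`, for `n ≥ 1`, equal to
`(1/n)·∑_{j=0}^{n-1} C(n,k-j)·C(n,j+1)·C(n-1+j,n-1)` (terms with `j > k`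
vanish). -/
theorem noncrossing_gf_coeff (F : MvPowerSeries (Fin 2) ℚ)
    (hconst : MvPowerSeries.constantCoeff F = 1)
    (heq : F * (1 - Yv * (F - 1)) =
      (1 + Xv * F) * (1 - Yv * (F - 1)) + Xv * Yv * F ^ 2) :
    ∀ n k : ℕ, 1 ≤ n →
      (n : ℚ) * MvPowerSeries.coeff (Finsupp.single 0 n + Finsupp.single 1 k) F =
        ∑ j ∈ Finset.range n,
          (if j ≤ k then
            (n.choose (k - j) * n.choose (j + 1) * (n - 1 + j).choose (n - 1) : ℚ)
           else 0) :=
  noncrossing_gf_coeff_general F heq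
end

section
/- The staircase encoding is injective on 132-avoiding permutations: if two 132-avoiding permutations have the same number of left-to-right minima and the same number of points in each box of their staircase grids, then they are equal. -/
/-- The staircase encoding of `π`: the number of non-left-to-right-minimum
points lying in box `(r,c)` of the staircase grid, where the row `r` of a
point is one more than the number of left-to-right minima above its value and
the column `c` is the number of left-to-right minima strictly to its left. -/
noncomputable def StaircaseEnc {n : ℕ} (π : Equiv.Perm (Fin n)) (r c : ℕ) : ℕ :=
  Nat.card {i : Fin n // ¬ IsLRMin π i ∧
    Nat.card {m : Fin n // IsLRMin π m ∧ π i < π m} + 1 = r ∧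
    Nat.card {m : Fin n // IsLRMin π m ∧ m < i} = c}

/-!
The encoding determines, in turn, the left-to-right minima, the rows of the other points, and
the relative order of any two points, which determines the permutation.

Position `i` is a minimum iff every non-minimum in a column `≤ col i` lies left of `i`. The number
of such non-minima is a sum of box counts and `col i` only depends on the minima left of `i`, so
the minima are recovered from left to right. Avoiding 132 forces the non-minima of one column, and
those of one row, to increase from left to right. So in the column of `i` the points in rows
`< row i` (higher values) lie right of `i`, and those right of `i` lie in rows `≤ row i`: the
number of points right of `i` in its column pins down `row i` from the box counts. Finally
`τ i < τ j` is read off from minimality, rows, columns and positions.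
-/

namespace Finset

variable {α : Type*} [Fintype α] {p q : α → Prop} [DecidablePred p] [DecidablePred q]

lemma card_filter_le_card_filter (h : ∀ x, p x → q x) : #{x | p x} ≤ #{x | q x} :=
  card_le_card (monotone_filter_right _ fun x _ => h x)

lemma card_filter_lt_card_filter (h : ∀ x, p x → q x) {a : α} (hqa : q a) (hpa : ¬ p a) :
    #{x | p x} < #{x | q x} :=
  card_lt_card <| (ssubset_iff_of_subset (monotone_filter_right _ fun x _ => h x)).2
    ⟨a, by simp [hqa], by simp [hpa]⟩

end Finset

lemma Equiv.Perm.eq_of_lt_iff_lt {α : Type*} [LinearOrder α] [Finite α] {π σ : Equiv.Perm α}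
    (h : ∀ i j, π i < π j ↔ σ i < σ j) : π = σ := by
  have hmono : StrictMono (σ ∘ π.symm) := fun a b hab => by
    simpa using (h (π.symm a) (π.symm b)).1 (by simpa using hab)
  exact Equiv.ext fun i => by simpa using (hmono.apply_eq (x := π i)).symm

open Finset

namespace Staircase

variable {n : ℕ}

instance (τ : Equiv.Perm (Fin n)) : DecidablePred (IsLRMin τ) :=
  fun i => inferInstanceAs (Decidable (∀ j, j < i → τ i < τ j))

def col (τ : Equiv.Perm (Fin n)) (i : Fin n) : ℕ :=
  #{m | IsLRMin τ m ∧ m < i}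

def row (τ : Equiv.Perm (Fin n)) (i : Fin n) : ℕ :=
  #{m | IsLRMin τ m ∧ τ i < τ m} + 1

lemma staircaseEnc_eq_card (τ : Equiv.Perm (Fin n)) (r c : ℕ) :
    StaircaseEnc τ r c = #{i | ¬IsLRMin τ i ∧ row τ i = r ∧ col τ i = c} := by
  simp only [StaircaseEnc, Nat.card_eq_fintype_card, Fintype.card_subtype, row, col]
  rfl

variable {τ : Equiv.Perm (Fin n)} {i j m : Fin n}

lemma exists_isLRMin_lt (hi : ¬IsLRMin τ i) : ∃ m < i, IsLRMin τ m ∧ τ m < τ i := by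
  obtain ⟨j, hji, hj⟩ : ∃ j < i, τ j ≤ τ i := by simpa [IsLRMin] using hi
  obtain ⟨m, hm, hmin⟩ := (Iio i).exists_min_image τ ⟨j, mem_Iio.2 hji⟩
  rw [mem_Iio] at hm
  refine ⟨m, hm, fun l hl => ?_, ?_⟩
  · exact (hmin l (mem_Iio.2 (hl.trans hm))).lt_of_ne (τ.injective.ne hl.ne')
  · exact ((hmin j (mem_Iio.2 hji)).trans hj).lt_of_ne (τ.injective.ne hm.ne)

lemma col_mono (h : i ≤ j) : col τ i ≤ col τ j :=
  card_filter_le_card_filter fun _ hl => ⟨hl.1, hl.2.trans_le h⟩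

lemma col_lt_col (hm : IsLRMin τ m) (him : i ≤ m) (hmj : m < j) : col τ i < col τ j :=
  card_filter_lt_card_filter (fun _ hl => ⟨hl.1, hl.2.trans (him.trans_lt hmj)⟩)
    ⟨hm, hmj⟩ fun h => h.2.not_ge him

lemma row_anti (h : τ i ≤ τ j) : row τ j ≤ row τ i :=
  Nat.add_le_add_right (card_filter_le_card_filter fun _ hl => ⟨hl.1, h.trans_lt hl.2⟩) 1

lemma row_lt_row (hm : IsLRMin τ m) (hjm : τ j < τ m) (hmi : τ m ≤ τ i) :
    row τ i < row τ j :=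
  Nat.add_lt_add_right (card_filter_lt_card_filter
    (fun _ hl => ⟨hl.1, hjm.trans (hmi.trans_lt hl.2)⟩) ⟨hm, hjm⟩ fun h => h.2.not_ge hmi) 1

lemma lt_of_row_lt (h : row τ i < row τ j) : τ j < τ i :=
  lt_of_not_ge fun hij => h.not_ge (row_anti hij)

lemma isLRMin_lt_iff (hi : IsLRMin τ i) (hj : IsLRMin τ j) : τ i < τ j ↔ j < i := by
  refine ⟨fun h => lt_of_not_ge fun hij => ?_, hi j⟩
  rcases hij.eq_or_lt with rfl | hij
  · exact h.false
  · exact (hj i hij).not_gt h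

lemma lt_isLRMin_iff (hm : IsLRMin τ m) : τ j < τ m ↔ col τ m + 1 < row τ j := by
  refine ⟨fun h => Nat.add_lt_add_right ?_ 1, fun h => lt_of_not_ge fun hmj => h.not_ge ?_⟩
  · exact card_filter_lt_card_filter (fun _ hl => ⟨hl.1, h.trans (hm _ hl.2)⟩) ⟨hm, h⟩
      (by simp)
  · refine Nat.add_le_add_right (card_filter_le_card_filter fun l hl => ⟨hl.1, ?_⟩) 1
    refine lt_of_not_ge fun hml => (hl.2.trans_le ?_).not_ge hmj
    rcases hml.eq_or_lt with rfl | hml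
    exacts [le_rfl, (hl.1 m hml).le]

lemma lt_of_lt_of_col_eq (hτ : Avoids132 τ) (hj : ¬IsLRMin τ j) (hij : i < j)
    (hc : col τ i = col τ j) : τ i < τ j := by
  obtain ⟨m, hmj, hm, hmτ⟩ := exists_isLRMin_lt hj
  refine lt_of_not_ge fun hji => ?_
  replace hji : τ j < τ i := hji.lt_of_ne (τ.injective.ne hij.ne')
  rcases lt_or_ge m i with hmi | him
  · exact hτ ⟨m, i, j, hmi, hij, hmτ, hji⟩
  · exact (col_lt_col hm him hmj).ne hc

lemma lt_of_lt_of_row_eq (hτ : Avoids132 τ) (hi : ¬IsLRMin τ i) (hij : i < j)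
    (hr : row τ i = row τ j) : τ i < τ j := by
  obtain ⟨m, hmi, hm, hmτ⟩ := exists_isLRMin_lt hi
  refine lt_of_not_ge fun hji => ?_
  replace hji : τ j < τ i := hji.lt_of_ne (τ.injective.ne hij.ne')
  rcases lt_or_gt_of_ne (τ.injective.ne (hmi.trans hij).ne) with hmj | hjm
  · exact hτ ⟨m, i, j, hmi, hij, hmj, hji⟩
  · exact (row_lt_row hm hjm hmτ.le).ne hr

lemma lt_iff_row_lt_or_row_eq_and_lt (hτ : Avoids132 τ) (hi : ¬IsLRMin τ i)
    (hj : ¬IsLRMin τ j) :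
    τ i < τ j ↔ row τ j < row τ i ∨ row τ i = row τ j ∧ i < j := by
  refine ⟨fun h => ?_, ?_⟩
  · refine (row_anti h.le).lt_or_eq.imp_right fun hr => ⟨hr.symm, lt_of_not_ge fun hji => ?_⟩
    rcases hji.eq_or_lt with rfl | hji
    · exact h.false
    · exact (lt_of_lt_of_row_eq hτ hj hji hr).not_gt h
  · rintro (hr | ⟨hr, hij⟩)
    exacts [lt_of_row_lt hr, lt_of_lt_of_row_eq hτ hi hij hr]

lemma row_le (τ : Equiv.Perm (Fin n)) (i : Fin n) : row τ i ≤ n + 1 :=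
  Nat.add_le_add_right ((card_filter_le _ _).trans_eq (card_fin n)) 1

lemma col_le (τ : Equiv.Perm (Fin n)) (i : Fin n) : col τ i ≤ n :=
  (card_filter_le _ _).trans_eq (card_fin n)

lemma card_filter_box_eq_sum (τ : Equiv.Perm (Fin n)) (P : ℕ × ℕ → Prop) [DecidablePred P] :
    #{i | ¬IsLRMin τ i ∧ P (row τ i, col τ i)} =
      ∑ b ∈ {b ∈ range (n + 2) ×ˢ range (n + 1) | P b}, StaircaseEnc τ b.1 b.2 := by
  rw [card_eq_sum_card_fiberwise (f := fun i => (row τ i, col τ i)) fun i hi => ?_]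
  · refine sum_congr rfl fun ⟨r, c⟩ hb => ?_
    rw [staircaseEnc_eq_card, filter_filter]
    refine congrArg card (filter_congr fun i _ => ?_)
    rw [mem_filter] at hb
    constructor
    · rintro ⟨⟨hi, -⟩, hb⟩
      exact ⟨hi, Prod.ext_iff.1 hb⟩
    · rintro ⟨hi, rfl, rfl⟩
      exact ⟨⟨hi, hb.2⟩, rfl⟩
  simp only [coe_filter, mem_univ, true_and, Set.mem_ofPred_eq, mem_product, mem_range] at hi ⊢
  exact ⟨⟨Nat.lt_succ_of_le (row_le τ i), Nat.lt_succ_of_le (col_le τ i)⟩, hi.2⟩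

lemma card_filter_box_congr {π σ : Equiv.Perm (Fin n)}
    (henc : ∀ r c, StaircaseEnc π r c = StaircaseEnc σ r c) (P : ℕ × ℕ → Prop)
    [DecidablePred P] :
    #{i | ¬IsLRMin π i ∧ P (row π i, col π i)} =
      #{i | ¬IsLRMin σ i ∧ P (row σ i, col σ i)} := by
  simp only [card_filter_box_eq_sum, henc]

lemma isLRMin_iff_card_eq (τ : Equiv.Perm (Fin n)) (i : Fin n) :
    IsLRMin τ i ↔
      #{j | ¬IsLRMin τ j ∧ col τ j ≤ col τ i} = #{j | ¬IsLRMin τ j ∧ j < i} := by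
  have hle : #{j | ¬IsLRMin τ j ∧ j < i} ≤ #{j | ¬IsLRMin τ j ∧ col τ j ≤ col τ i} :=
    card_filter_le_card_filter fun j hj => ⟨hj.1, col_mono hj.2.le⟩
  refine ⟨fun hi => le_antisymm (card_filter_le_card_filter fun j hj => ⟨hj.1, ?_⟩) hle,
    fun h => by_contra fun hi => ?_⟩
  · refine lt_of_not_ge fun hij => hj.2.not_gt (col_lt_col hi le_rfl ?_)
    exact hij.lt_of_ne fun hij => hj.1 (hij ▸ hi)
  · exact h.not_gt (card_filter_lt_card_filter (fun j hj => ⟨hj.1, col_mono hj.2.le⟩)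
      ⟨hi, le_rfl⟩ fun h => h.2.false)

lemma col_congr {π σ : Equiv.Perm (Fin n)} (h : ∀ j < i, IsLRMin π j ↔ IsLRMin σ j) :
    col π i = col σ i :=
  congrArg card <| filter_congr fun j _ => and_congr_left fun hj => h j hj

lemma isLRMin_congr {π σ : Equiv.Perm (Fin n)}
    (henc : ∀ r c, StaircaseEnc π r c = StaircaseEnc σ r c) (i : Fin n) :
    IsLRMin π i ↔ IsLRMin σ i := by
  induction i using WellFoundedLT.induction with
  | _ i ih =>
    have hleft : #{j | ¬IsLRMin π j ∧ j < i} = #{j | ¬IsLRMin σ j ∧ j < i} :=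
      congrArg card <| filter_congr fun j _ => and_congr_left fun hj => not_congr (ih j hj)
    rw [isLRMin_iff_card_eq, isLRMin_iff_card_eq, col_congr ih, hleft,
      card_filter_box_congr henc fun b => b.2 ≤ col σ i]

lemma card_row_lt_le_card_lt (hτ : Avoids132 τ) (hi : ¬IsLRMin τ i) :
    #{j | ¬IsLRMin τ j ∧ col τ j = col τ i ∧ row τ j < row τ i} ≤
      #{j | ¬IsLRMin τ j ∧ col τ j = col τ i ∧ i < j} := by
  refine card_filter_le_card_filter fun j ⟨hj, hc, hr⟩ =>
    ⟨hj, hc, lt_of_not_ge fun hji => ?_⟩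
  rcases hji.eq_or_lt with rfl | hji
  · exact hr.false
  · exact (lt_of_lt_of_col_eq hτ hi hji hc).not_gt (lt_of_row_lt hr)

lemma card_lt_lt_card_row_le (hτ : Avoids132 τ) (hi : ¬IsLRMin τ i) :
    #{j | ¬IsLRMin τ j ∧ col τ j = col τ i ∧ i < j} <
      #{j | ¬IsLRMin τ j ∧ col τ j = col τ i ∧ row τ j ≤ row τ i} :=
  card_filter_lt_card_filter
    (fun _ ⟨hj, hc, hij⟩ => ⟨hj, hc, row_anti (lt_of_lt_of_col_eq hτ hj hij hc.symm).le⟩)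
    ⟨hi, rfl, le_rfl⟩ fun h => h.2.2.false

lemma row_le_iff (hτ : Avoids132 τ) (hi : ¬IsLRMin τ i) (r : ℕ) :
    row τ i ≤ r ↔ #{j | ¬IsLRMin τ j ∧ col τ j = col τ i ∧ i < j} <
      #{j | ¬IsLRMin τ j ∧ col τ j = col τ i ∧ row τ j ≤ r} := by
  refine ⟨fun h => (card_lt_lt_card_row_le hτ hi).trans_le ?_, fun h => ?_⟩
  · exact card_filter_le_card_filter fun _ ⟨hj, hc, hr⟩ => ⟨hj, hc, hr.trans h⟩
  · refine le_of_not_gt fun hr => h.not_ge (le_trans ?_ (card_row_lt_le_card_lt hτ hi))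
    exact card_filter_le_card_filter fun _ ⟨hj, hc, hjr⟩ => ⟨hj, hc, hjr.trans_lt hr⟩

lemma row_congr {π σ : Equiv.Perm (Fin n)} (hπ : Avoids132 π) (hσ : Avoids132 σ)
    (henc : ∀ r c, StaircaseEnc π r c = StaircaseEnc σ r c)
    (hmin : ∀ j, IsLRMin π j ↔ IsLRMin σ j) (hi : ¬IsLRMin π i) : row π i = row σ i := by
  have hcol (j : Fin n) : col π j = col σ j := col_congr fun k _ => hmin k
  refine eq_of_forall_ge_iff fun r => ?_
  rw [row_le_iff hπ hi, row_le_iff hσ ((hmin i).not.1 hi), hcol i,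
    card_filter_box_congr henc fun b => b.2 = col σ i ∧ b.1 ≤ r]
  simp only [hmin, hcol]

lemma lt_iff_lt_of_isLRMin_iff_of_row_eq {π σ : Equiv.Perm (Fin n)} (hπ : Avoids132 π)
    (hσ : Avoids132 σ) (hmin : ∀ j, IsLRMin π j ↔ IsLRMin σ j)
    (hrow : ∀ j, ¬IsLRMin π j → row π j = row σ j) (i j : Fin n) :
    π i < π j ↔ σ i < σ j := by
  have hcol (k : Fin n) : col π k = col σ k := col_congr fun l _ => hmin l
  by_cases hi : IsLRMin π i <;> by_cases hj : IsLRMin π j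
  · rw [isLRMin_lt_iff hi hj, isLRMin_lt_iff ((hmin i).1 hi) ((hmin j).1 hj)]
  · have hij : i ≠ j := fun h => hj (h ▸ hi)
    rw [← (π.injective.ne hij).le_iff_lt, ← (σ.injective.ne hij).le_iff_lt, ← not_lt,
      ← not_lt, lt_isLRMin_iff hi, lt_isLRMin_iff ((hmin i).1 hi), hcol i, hrow j hj]
  · rw [lt_isLRMin_iff hj, lt_isLRMin_iff ((hmin j).1 hj), hcol j, hrow i hi]
  · rw [lt_iff_row_lt_or_row_eq_and_lt hπ hi hj,
      lt_iff_row_lt_or_row_eq_and_lt hσ ((hmin i).not.1 hi) ((hmin j).not.1 hj),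
      hrow i hi, hrow j hj]

end Staircase

theorem staircase_encoding_injective_general {n : ℕ} (π σ : Equiv.Perm (Fin n))
    (hπ : Avoids132 π) (hσ : Avoids132 σ)
    (henc : ∀ r c : ℕ, StaircaseEnc π r c = StaircaseEnc σ r c) :
    π = σ := by
  have hmin := Staircase.isLRMin_congr henc
  exact Equiv.Perm.eq_of_lt_iff_lt <| Staircase.lt_iff_lt_of_isLRMin_iff_of_row_eq hπ hσ hmin
    fun _ => Staircase.row_congr hπ hσ henc hmin

/-- The staircase encoding is injective on 132-avoiding permutations: two
132-avoiding permutations of the same length with the same number of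
left-to-right minima and the same number of points in each box of the
staircase grid are equal. -/
theorem staircase_encoding_injective {n : ℕ} (π σ : Equiv.Perm (Fin n))
    (hπ : Avoids132 π) (hσ : Avoids132 σ)
    (hlrm : Nat.card {i : Fin n // IsLRMin π i} =
      Nat.card {i : Fin n // IsLRMin σ i})
    (henc : ∀ r c : ℕ, StaircaseEnc π r c = StaircaseEnc σ r c) :
    π = σ :=
  staircase_encoding_injective_general π σ hπ hσ henc
end
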